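/- arXiv:1501.06427 — 13 statements merged into one kernel-verified Lean document; each statement's English description precedes it below -/
import Mathlib

section
/- If g : I → I is a continuous solution of the equation g^3(x) = 3*g(x) - 2*x on a nondegenerate interval I ⊆ ℝ with I ≠ ℝ, then g is strictly increasing on I. -/
/-!
Injectivity of `g` is immediate from the equation. For `z ∈ I` the orbit `uₙ = gⁿ(z)` stays in `I`
and satisfies `uₙ₊₃ = 3uₙ₊₁ - 2uₙ`, whose characteristic polynomial is `(X - 1)²(X + 2)`; hence
`uₙ = a + bn + c(-2)ⁿ` with `9c = z - 2g(z) + g(g(z))`. If `c ≠ 0` the orbit is unbounded above and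
below, forcing the interval `I` to be all of `ℝ`. So `g(g(z)) = 2g(z) - z` on `I`.

Being continuous and injective on an interval, `g` is strictly monotone or strictly antitone there.
If it were antitone, `x < y` would give `g y < g x`, then `g (g x) < g (g y)`, that is
`2(g x - g y) < x - y < 0`, which is absurd.
-/

open Set Filter Topology

section Dichotomy

variable {α δ : Type*} [ConditionallyCompleteLinearOrder α] [TopologicalSpace α] [OrderTopology α]
  [DenselyOrdered α] [LinearOrder δ] [TopologicalSpace δ] [OrderClosedTopology δ]

theorem ContinuousOn.strictMonoOn_or_strictAntiOn_of_injOn {s : Set α} {f : α → δ}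
    (hs : s.OrdConnected) (hf : ContinuousOn f s) (hinj : InjOn f s) :
    StrictMonoOn f s ∨ StrictAntiOn f s := by
  by_contra! ⟨hmono, hanti⟩
  simp only [StrictMonoOn, StrictAntiOn, not_forall, not_lt] at hmono hanti
  obtain ⟨a, ha, b, hb, hab, hfba⟩ := hmono
  obtain ⟨c, hc, d, hd, hcd, hfcd⟩ := hanti
  have hsub : Icc (min a c) (max b d) ⊆ s := hs.out (min_rec' _ ha hc) (max_rec' _ hb hd)
  have hac : min a c ≤ max b d := (min_le_left a c).trans (hab.le.trans (le_max_left b d))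
  rcases ContinuousOn.strictMonoOn_of_injOn_Icc' hac (hf.mono hsub) (hinj.mono hsub) with h | h
  · exact (h ⟨min_le_left a c, hab.le.trans (le_max_left b d)⟩
      ⟨(min_le_left a c).trans hab.le, le_max_left b d⟩ hab).not_ge hfba
  · exact (h ⟨min_le_right a c, hcd.le.trans (le_max_right b d)⟩
      ⟨(min_le_right a c).trans hcd.le, le_max_right b d⟩ hcd).not_ge hfcd

end Dichotomy

theorem eq_of_recurrence_of_eq_init {u v : ℕ → ℝ}
    (hu : ∀ n, u (n + 3) = 3 * u (n + 1) - 2 * u n)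
    (hv : ∀ n, v (n + 3) = 3 * v (n + 1) - 2 * v n)
    (h0 : u 0 = v 0) (h1 : u 1 = v 1) (h2 : u 2 = v 2) : u = v := by
  funext n
  induction n using Nat.strong_induction_on with
  | _ n ih =>
    match n with
    | 0 => exact h0
    | 1 => exact h1
    | 2 => exact h2
    | n + 3 => rw [hu, hv, ih n (by omega), ih (n + 1) (by omega)]

theorem exists_closed_form_of_recurrence {u : ℕ → ℝ}
    (hu : ∀ n, u (n + 3) = 3 * u (n + 1) - 2 * u n) :
    ∃ a b : ℝ, ∀ n : ℕ, u n = a + b * n + (u 0 - 2 * u 1 + u 2) / 9 * (-2) ^ n := by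
  set c := (u 0 - 2 * u 1 + u 2) / 9
  refine ⟨u 0 - c, (u 2 - u 0 - 3 * c) / 2, congrFun (eq_of_recurrence_of_eq_init hu
    (v := fun n : ℕ => u 0 - c + (u 2 - u 0 - 3 * c) / 2 * n + c * (-2) ^ n) ?_ ?_ ?_ ?_)⟩
  · intro n; push_cast; ring
  all_goals simp only [c]; push_cast; ring

theorem tendsto_add_mul_add_mul_pow_atTop {a b c r : ℝ} (hc : 0 < c) (hr : 1 < r) :
    Tendsto (fun n : ℕ => a + b * n + c * r ^ n) atTop atTop := by
  have hlin : Tendsto (fun n : ℕ => a * (r ^ n)⁻¹ + b * (n ^ 1 / r ^ n) + c) atTop (𝓝 c) := by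
    simpa using (((tendsto_inv_atTop_zero.comp (tendsto_pow_atTop_atTop_of_one_lt hr)).const_mul
      a).add ((tendsto_pow_const_div_const_pow_of_one_lt 1 hr).const_mul b)).add_const c
  refine ((tendsto_pow_atTop_atTop_of_one_lt hr).atTop_mul_pos hc hlin).congr fun n => ?_
  have : r ^ n ≠ 0 := by positivity
  field_simp

theorem tendsto_add_mul_add_mul_pow_atBot {a b c r : ℝ} (hc : c < 0) (hr : 1 < r) :
    Tendsto (fun n : ℕ => a + b * n + c * r ^ n) atTop atBot := by
  refine (tendsto_neg_atTop_atBot.comp (tendsto_add_mul_add_mul_pow_atTop (a := -a) (b := -b)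
    (neg_pos.2 hc) hr)).congr fun n => ?_
  simp only [Function.comp_apply]
  ring

theorem not_bddAbove_and_not_bddBelow_range {a b c : ℝ} (hc : c ≠ 0) :
    ¬BddAbove (range fun n : ℕ => a + b * n + c * (-2) ^ n) ∧
      ¬BddBelow (range fun n : ℕ => a + b * n + c * (-2) ^ n) := by
  set f := fun n : ℕ => a + b * n + c * (-2) ^ n
  have heven : (fun n : ℕ => f (2 * n)) = fun n : ℕ => a + 2 * b * n + c * 4 ^ n := by
    funext n; simp only [f, pow_mul]; push_cast; ring
  have hodd :
      (fun n : ℕ => f (2 * n + 1)) = fun n : ℕ => (a + b) + 2 * b * n + (-2 * c) * 4 ^ n := by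
    funext n; simp only [f, pow_succ, pow_mul]; push_cast; ring
  have hsub_even : range (fun n : ℕ => f (2 * n)) ⊆ range f := range_comp_subset_range _ f
  have hsub_odd : range (fun n : ℕ => f (2 * n + 1)) ⊆ range f := range_comp_subset_range _ f
  have h4 : (1 : ℝ) < 4 := by norm_num
  rcases hc.lt_or_gt with hc | hc
  · have hbot := tendsto_add_mul_add_mul_pow_atBot (a := a) (b := 2 * b) hc h4
    have htop := tendsto_add_mul_add_mul_pow_atTop (a := a + b) (b := 2 * b) (c := -2 * c)
      (by linarith) h4
    rw [← heven] at hbot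
    rw [← hodd] at htop
    exact ⟨fun h => not_bddAbove_of_tendsto_atTop htop (h.mono hsub_odd),
      fun h => not_bddBelow_of_tendsto_atBot hbot (h.mono hsub_even)⟩
  · have htop := tendsto_add_mul_add_mul_pow_atTop (a := a) (b := 2 * b) hc h4
    have hbot := tendsto_add_mul_add_mul_pow_atBot (a := a + b) (b := 2 * b) (c := -2 * c)
      (by linarith) h4
    rw [← heven] at htop
    rw [← hodd] at hbot
    exact ⟨fun h => not_bddAbove_of_tendsto_atTop htop (h.mono hsub_even),
      fun h => not_bddBelow_of_tendsto_atBot hbot (h.mono hsub_odd)⟩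

theorem iterate_two_eq_of_ne_univ {I : Set ℝ} (hI : I.OrdConnected) (hne : I ≠ univ) {g : ℝ → ℝ}
    (hmap : MapsTo g I I) (heq : ∀ x ∈ I, g (g (g x)) = 3 * g x - 2 * x) {z : ℝ} (hz : z ∈ I) :
    g (g z) = 2 * g z - z := by
  by_contra hz2
  set u : ℕ → ℝ := fun n => g^[n] z
  have hu : ∀ n, u n ∈ I := fun n => hmap.iterate n hz
  have hrec : ∀ n, u (n + 3) = 3 * u (n + 1) - 2 * u n := by
    intro n
    simp only [u, Function.iterate_succ_apply']
    exact heq _ (hu n)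
  have hc : (u 0 - 2 * u 1 + u 2) / 9 ≠ 0 := by
    simp only [u, Function.iterate_zero_apply, Function.iterate_succ_apply']
    contrapose! hz2
    linarith
  obtain ⟨a, b, hab⟩ := exists_closed_form_of_recurrence hrec
  obtain ⟨hA, hB⟩ := not_bddAbove_and_not_bddBelow_range (a := a) (b := b) hc
  have hrange : range u ⊆ I := range_subset_iff.2 hu
  rw [← funext hab] at hA hB
  exact hne (hI.isPreconnected.eq_univ_of_unbounded (fun h => hB (h.mono hrange))
    (fun h => hA (h.mono hrange)))

/-- If `g : I → I` is a continuous solution of `g∘g∘g (x) = 3 g(x) - 2 x` on a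
nondegenerate interval `I ⊆ ℝ` with `I ≠ ℝ`, then `g` is strictly increasing on `I`. -/
theorem stmt_1 (I : Set ℝ) (hI : I.OrdConnected) (hnd : I.Nontrivial)
    (hne : I ≠ Set.univ)
    (g : ℝ → ℝ) (hmap : Set.MapsTo g I I) (hcont : ContinuousOn g I)
    (heq : ∀ x ∈ I, g (g (g x)) = 3 * g x - 2 * x) :
    StrictMonoOn g I := by
  have hinj : InjOn g I := fun x hx y hy hxy => by
    have := heq x hx
    rw [hxy, heq y hy] at this
    linarith
  refine (hcont.strictMonoOn_or_strictAntiOn_of_injOn hI hinj).resolve_right fun hanti => ?_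
  obtain ⟨x, hx, y, hy, hxy⟩ := hnd.exists_lt
  have hgyx : g y < g x := hanti hx hy hxy
  have hggxy := hanti (hmap hy) (hmap hx) hgyx
  rw [iterate_two_eq_of_ne_univ hI hne hmap heq hx,
    iterate_two_eq_of_ne_univ hI hne hmap heq hy] at hggxy
  linarith
end

section
/- Every continuous function g : ℝ → ℝ satisfying g^3(x) = 3*g(x) - 2*x for all x ∈ ℝ is a bijection of ℝ onto ℝ. -/
/-!
Equation (E) determines `x` from `g x`, so `g` is injective, hence strictly monotone by continuity.
If `g` increases, then so does `g∘g∘g = 3g - 2id`, i.e. `g - (2/3)id` is monotone; if `g` decreases,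
then `g∘g∘g = 3g - 2id` is a decreasing function plus a strictly decreasing linear term. Either way
one of `g`, `g∘g∘g` moves at least linearly at both ends, so it is onto, and so is `g`.
-/

open Filter

theorem Continuous.surjective_of_monotone_sub_mul {f : ℝ → ℝ} (hf : Continuous f) {c : ℝ}
    (hc : 0 < c) (hmono : Monotone fun x => f x - c * x) : Function.Surjective f := by
  refine hf.surjective ?_ ?_
  · simpa only [id, sub_add_cancel] using tendsto_atTop_add_left_of_le' atTop (f 0 - c * 0)
      ((eventually_ge_atTop 0).mono fun x hx => hmono hx) (tendsto_id.const_mul_atTop hc)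
  · simpa only [id, sub_add_cancel] using tendsto_atBot_add_left_of_ge' atBot (f 0 - c * 0)
      ((eventually_le_atBot 0).mono fun x hx => hmono hx) (tendsto_id.const_mul_atBot hc)

section

variable {g : ℝ → ℝ} (heq : ∀ x, g (g (g x)) = 3 * g x - 2 * x)
include heq

theorem injective_of_iterate_three_eq : Function.Injective g := by
  intro a b hab
  have := heq a
  rw [hab, heq b] at this
  linarith

theorem monotone_sub_of_iterate_three_eq (hg : StrictMono g) :
    Monotone fun x => g x - 2 / 3 * x := by
  refine StrictMono.monotone fun x y hxy => ?_
  have := (hg.comp (hg.comp hg)) hxy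
  simp only [Function.comp, heq] at this
  linarith

end

/-- Every continuous solution `g : ℝ → ℝ` of `g∘g∘g (x) = 3 g(x) - 2 x` on `ℝ`
is a bijection of `ℝ` onto `ℝ`. -/
theorem stmt_2 (g : ℝ → ℝ) (hcont : Continuous g)
    (heq : ∀ x : ℝ, g (g (g x)) = 3 * g x - 2 * x) :
    Function.Bijective g := by
  have hinj := injective_of_iterate_three_eq heq
  refine ⟨hinj, ?_⟩
  rcases hcont.strictMono_of_inj hinj with hmono | hanti
  · exact hcont.surjective_of_monotone_sub_mul (by norm_num)
      (monotone_sub_of_iterate_three_eq heq hmono)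
  · have hsurj : Function.Surjective fun x => 2 * x - 3 * g x := by
      refine Continuous.surjective_of_monotone_sub_mul (by fun_prop) two_pos fun x y hxy => ?_
      have := hanti.antitone hxy
      dsimp only
      linarith
    intro y
    obtain ⟨x, hx⟩ := hsurj (-y)
    exact ⟨g (g x), by linarith [heq x]⟩
end

section
/- Let (a_n), (b_n), (c_n) be the sequences with a_0 = 0, b_0 = 3, c_0 = -2 and a_{n+1} = b_n, b_{n+1} = 3*a_n + c_n, c_{n+1} = -2*a_n for all n ≥ 0. Then for every n ≥ 0 one has b_{n+1} - b_n = Σ_{k=0}^{n+3} (-2)^k. -/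
/-! The sum `a n + b n + c n` is invariant, hence always `1`. Using it, the difference
`b (n + 1) - b n = 3 * a n + c n - b n` satisfies `d (n + 1) = -2 * d n + 1`, the recursion
obeyed by the partial geometric sums of `-2`; both start at `1 - 2 + 4 - 8 = -5`. -/

theorem eq_geom_sum_of_eq_mul_add_one {R : Type*} [Semiring R] {x : R} {u : ℕ → R} {m : ℕ}
    (h0 : u 0 = ∑ k ∈ Finset.range m, x ^ k) (hsucc : ∀ n, u (n + 1) = x * u n + 1) (n : ℕ) :
    u n = ∑ k ∈ Finset.range (n + m), x ^ k := by
  induction n with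
  | zero => rw [h0, zero_add]
  | succ n ih => rw [hsucc, ih, Nat.succ_add, geom_sum_succ]

/-- With the integer sequences `a, b, c` defined by `a 0 = 0`, `b 0 = 3`, `c 0 = -2`,
`a (n+1) = b n`, `b (n+1) = 3 * a n + c n`, `c (n+1) = -2 * a n`, one has
`b (n+1) - b n = ∑_{k=0}^{n+3} (-2)^k` for every `n`. -/
theorem stmt_5 (a b c : ℕ → ℤ)
    (ha0 : a 0 = 0) (hb0 : b 0 = 3) (hc0 : c 0 = -2)
    (ha : ∀ n, a (n + 1) = b n) (hb : ∀ n, b (n + 1) = 3 * a n + c n)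
    (hc : ∀ n, c (n + 1) = -2 * a n) :
    ∀ n : ℕ, b (n + 1) - b n = ∑ k ∈ Finset.range (n + 4), (-2 : ℤ) ^ k := by
  have sum_eq_one : ∀ n, a n + b n + c n = 1 := by
    intro n
    induction n with
    | zero => rw [ha0, hb0, hc0]; norm_num
    | succ n ih => rw [ha, hb, hc]; linarith
  have diff_succ : ∀ n, b (n + 2) - b (n + 1) = -2 * (b (n + 1) - b n) + 1 := by
    intro n
    rw [hb (n + 1), hb n, ha, hc]
    linarith [sum_eq_one n]
  have diff_zero : b 1 - b 0 = ∑ k ∈ Finset.range 4, (-2 : ℤ) ^ k := by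
    rw [hb, ha0, hb0, hc0]
    decide
  exact eq_geom_sum_of_eq_mul_add_one (u := fun n ↦ b (n + 1) - b n) diff_zero diff_succ
end

section
/- Let (b_n) be the sequence with b_n = ((-2)^{n+4} + 3*n + 11)/9 (equivalently, the middle sequence of the recurrence a_0 = 0, b_0 = 3, c_0 = -2, a_{n+1} = b_n, b_{n+1} = 3*a_n + c_n, c_{n+1} = -2*a_n). If g : I → I is a continuous solution of g^3(x) = 3*g(x) - 2*x on a nondegenerate interval I ⊆ ℝ, then for every x ∈ I the sequence g^{n+3}(x)/b_n converges, as n → ∞, to -(1/2)*g^2(x) + g(x) - (1/2)*x. -/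
/-!
The orbit `u n = g^[n] x` satisfies the linear recurrence `u (n + 3) = 3 u (n + 1) - 2 u n`,
whose characteristic polynomial is `t ^ 3 - 3 t + 2 = (t - 1) ^ 2 (t + 2)`. Hence
`u n = α + β n + γ (-2) ^ n`, and `b n` has the same shape. Both are dominated by their
`(-2) ^ n` terms, so the quotient tends to the ratio of the leading coefficients, which is
`-(u 2 - 2 u 1 + u 0) / 2`.
-/

open Filter Topology

theorem iterate_add_three_eq {R : Type*} [Ring R] {I : Set R} {g : R → R}
    (hmap : Set.MapsTo g I I) (heq : ∀ x ∈ I, g (g (g x)) = 3 * g x - 2 * x)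
    {x : R} (hx : x ∈ I) (n : ℕ) :
    g^[n + 3] x = 3 * g^[n + 1] x - 2 * g^[n] x := by
  simp only [Function.iterate_succ_apply']
  exact heq _ (hmap.iterate n hx)

theorem eq_closedForm_of_rec {K : Type*} [Field K] [CharZero K] {u : ℕ → K}
    (hrec : ∀ n, u (n + 3) = 3 * u (n + 1) - 2 * u n) (n : ℕ) :
    let γ := (u 2 - 2 * u 1 + u 0) / 9
    u n = (u 0 - γ) + (u 1 - u 0 + 3 * γ) * n + γ * (-2) ^ n := by
  intro γ
  induction n using Nat.strong_induction_on with
  | _ n ih =>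
    match n, ih with
    | 0, _ => simp
    | 1, _ => push_cast; ring
    | 2, _ => simp only [γ]; push_cast; ring
    | n + 3, ih =>
      rw [hrec, ih (n + 1) (by omega), ih n (by omega)]
      push_cast
      ring

theorem tendsto_affine_add_mul_pow_div_pow {r : ℝ} (hr : 1 < |r|) (p q c : ℝ) :
    Tendsto (fun n : ℕ => (p + q * n + c * r ^ n) / r ^ n) atTop (𝓝 c) := by
  have hr₀ : r ≠ 0 := abs_pos.mp (one_pos.trans hr)
  have hinv : |r⁻¹| < 1 := by rw [abs_inv]; exact inv_lt_one_of_one_lt₀ hr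
  have hlim : Tendsto (fun n : ℕ => p * r⁻¹ ^ n + q * (n * r⁻¹ ^ n) + c) atTop
      (𝓝 (p * 0 + q * 0 + c)) :=
    (((tendsto_pow_atTop_nhds_zero_of_abs_lt_one hinv).const_mul p).add
      ((tendsto_self_mul_const_pow_of_abs_lt_one hinv).const_mul q)).add_const c
  simp only [mul_zero, add_zero, zero_add] at hlim
  refine hlim.congr fun n => ?_
  have hrn : r ^ n ≠ 0 := pow_ne_zero n hr₀
  rw [inv_pow]
  field_simp

theorem tendsto_div_of_affine_add_mul_pow {r : ℝ} (hr : 1 < |r|) (p q c p' q' d : ℝ)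
    (hd : d ≠ 0) :
    Tendsto (fun n : ℕ => (p + q * n + c * r ^ n) / (p' + q' * n + d * r ^ n)) atTop
      (𝓝 (c / d)) := by
  have hr₀ : r ≠ 0 := abs_pos.mp (one_pos.trans hr)
  refine ((tendsto_affine_add_mul_pow_div_pow hr p q c).div
    (tendsto_affine_add_mul_pow_div_pow hr p' q' d) hd).congr fun n => ?_
  exact div_div_div_cancel_right₀ (pow_ne_zero n hr₀) _ _

theorem stmt_7_general (b : ℕ → ℝ)
    (hbdef : ∀ n : ℕ, b n = ((-2 : ℝ) ^ (n + 4) + 3 * n + 11) / 9)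
    (I : Set ℝ)
    (g : ℝ → ℝ) (hmap : Set.MapsTo g I I)
    (heq : ∀ x ∈ I, g (g (g x)) = 3 * g x - 2 * x) :
    ∀ x ∈ I,
      Filter.Tendsto (fun n : ℕ => g^[n + 3] x / b n) Filter.atTop
        (nhds (-(1 / 2) * g (g x) + g x - (1 / 2) * x)) := by
  intro x hx
  set γ := (g (g x) - 2 * g x + x) / 9
  set β := g x - x + 3 * γ
  have horbit : ∀ n, g^[n] x = (x - γ) + β * n + γ * (-2) ^ n :=
    eq_closedForm_of_rec (u := fun n => g^[n] x) (iterate_add_three_eq hmap heq hx)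
  have hlim := tendsto_div_of_affine_add_mul_pow (r := -2) (by norm_num)
    (x - γ + 3 * β) β (-8 * γ) (11 / 9) (1 / 3) (16 / 9) (by norm_num)
  convert hlim using 2 with n
  · rw [horbit, hbdef]
    push_cast
    ring
  · simp only [γ]
    ring

/-- Let `b n = ((-2)^(n+4) + 3n + 11) / 9`. If `g : I → I` is a continuous solution of
`g∘g∘g (x) = 3 g(x) - 2 x` on a nondegenerate interval `I ⊆ ℝ`, then for every `x ∈ I`
the sequence `g^[n+3] x / b n` converges to `-(1/2) g(g x) + g x - (1/2) x`. -/
theorem stmt_7 (b : ℕ → ℝ)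
    (hbdef : ∀ n : ℕ, b n = ((-2 : ℝ) ^ (n + 4) + 3 * n + 11) / 9)
    (I : Set ℝ) (hI : I.OrdConnected) (hnd : I.Nontrivial)
    (g : ℝ → ℝ) (hmap : Set.MapsTo g I I) (hcont : ContinuousOn g I)
    (heq : ∀ x ∈ I, g (g (g x)) = 3 * g x - 2 * x) :
    ∀ x ∈ I,
      Filter.Tendsto (fun n : ℕ => g^[n + 3] x / b n) Filter.atTop
        (nhds (-(1 / 2) * g (g x) + g x - (1 / 2) * x)) :=
  stmt_7_general b hbdef I g hmap heq
end

section
/- Let g : I → I be a continuous solution of g^3(x) = 3*g(x) - 2*x on a nondegenerate interval I ⊆ ℝ. If for every x ∈ I the sequence (g^n(x))_{n≥1} converges to a real number, then g(x) = x for every x ∈ I. -/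
/-!
Along an orbit `a n = g^[n] x` the equation reads `a (n + 3) = 3 a (n + 1) - 2 a n`, whose
characteristic polynomial is `(t - 1)² (t + 2)`. Hence the second differences of `a` are
multiplied by `-2` at each step; since they tend to `0` they vanish. Then the first differences
are constant and also tend to `0`, so `a` is constant, i.e. `g x = x`.
-/

open Filter Topology

theorem Filter.Tendsto.succ_sub_self {G : Type*} [AddGroup G] [TopologicalSpace G]
    [IsTopologicalAddGroup G] {a : ℕ → G} {L : G} (h : Tendsto a atTop (𝓝 L)) :
    Tendsto (fun n => a (n + 1) - a n) atTop (𝓝 0) := by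
  simpa using (h.comp (tendsto_add_atTop_nat 1)).sub h

theorem eq_zero_of_tendsto_zero_of_monotone_norm {E : Type*} [NormedAddGroup E] {u : ℕ → E}
    (hmono : Monotone fun n => ‖u n‖) (h : Tendsto u atTop (𝓝 0)) (n : ℕ) : u n = 0 :=
  norm_le_zero_iff.mp (hmono.ge_of_tendsto (tendsto_zero_iff_norm_tendsto_zero.mp h) n)

theorem succ_eq_of_tendsto_of_recurrence {a : ℕ → ℝ}
    (hrec : ∀ n, a (n + 3) = 3 * a (n + 1) - 2 * a n) {L : ℝ} (h : Tendsto a atTop (𝓝 L))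
    (n : ℕ) : a (n + 1) = a n := by
  set d : ℕ → ℝ := fun n => a (n + 1) - a n
  have hd : Tendsto d atTop (𝓝 0) := h.succ_sub_self
  have hdd_rec : ∀ n, d (n + 2) - d (n + 1) = -2 * (d (n + 1) - d n) := fun n => by
    simp only [d, hrec]; ring
  have hdd_zero : ∀ n, d (n + 1) - d n = 0 := by
    refine eq_zero_of_tendsto_zero_of_monotone_norm (monotone_nat_of_le_succ fun n => ?_)
      hd.succ_sub_self
    rw [hdd_rec, norm_mul]
    exact le_mul_of_one_le_left (norm_nonneg _) (by norm_num)
  have hd_const : ∀ n, d n = d 0 := fun n => by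
    induction n with
    | zero => rfl
    | succ n ih => rw [← ih]; linarith [hdd_zero n]
  have hd_zero : d n = 0 := eq_zero_of_tendsto_zero_of_monotone_norm
    (monotone_nat_of_le_succ fun n => by rw [hd_const n, hd_const (n + 1)]) hd n
  exact sub_eq_zero.mp hd_zero

theorem stmt_8_general (I : Set ℝ)
    (g : ℝ → ℝ) (hmap : Set.MapsTo g I I)
    (heq : ∀ x ∈ I, g (g (g x)) = 3 * g x - 2 * x)
    (hconv : ∀ x ∈ I, ∃ L : ℝ,
      Filter.Tendsto (fun n : ℕ => g^[n] x) Filter.atTop (nhds L)) :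
    ∀ x ∈ I, g x = x := by
  intro x hx
  obtain ⟨L, hL⟩ := hconv x hx
  have hrec : ∀ n, g^[n + 3] x = 3 * g^[n + 1] x - 2 * g^[n] x := fun n => by
    simp only [Function.iterate_succ_apply']
    exact heq _ (hmap.iterate n hx)
  simpa using succ_eq_of_tendsto_of_recurrence hrec hL 0

/-- Let `g : I → I` be a continuous solution of `g∘g∘g (x) = 3 g(x) - 2 x` on a
nondegenerate interval `I ⊆ ℝ`. If for every `x ∈ I` the sequence of iterates
`g^[n] x` converges to a real number, then `g = id` on `I`. -/
theorem stmt_8 (I : Set ℝ) (hI : I.OrdConnected) (hnd : I.Nontrivial)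
    (g : ℝ → ℝ) (hmap : Set.MapsTo g I I) (hcont : ContinuousOn g I)
    (heq : ∀ x ∈ I, g (g (g x)) = 3 * g x - 2 * x)
    (hconv : ∀ x ∈ I, ∃ L : ℝ,
      Filter.Tendsto (fun n : ℕ => g^[n] x) Filter.atTop (nhds L)) :
    ∀ x ∈ I, g x = x :=
  stmt_8_general I g hmap heq hconv
end

section
/- Let g : I → I be a continuous solution of g^3(x) = 3*g(x) - 2*x on a nondegenerate interval I ⊆ ℝ. If x ∈ I satisfies g^2(x) - 2*g(x) + x ≠ 0, then the sequence g^{n+4}(x)/g^{n+3}(x) converges to -2 as n → ∞. -/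
/-!
The orbit `aₙ = gⁿ(x)` satisfies the linear recurrence `aₙ₊₃ = 3aₙ₊₁ - 2aₙ`, whose
characteristic polynomial is `t³ - 3t + 2 = (t - 1)²(t + 2)`. Hence
`aₙ = A + Bn + C(-2)ⁿ` with `9C = a₂ - 2a₁ + a₀ ≠ 0`, so `aₙ / (-2)ⁿ → C` and the
ratio of consecutive terms tends to `-2`.
-/

open Filter Topology

lemma eq_closedForm_of_recurrence {a : ℕ → ℝ} (h : ∀ n, a (n + 3) = 3 * a (n + 1) - 2 * a n)
    {C : ℝ} (hC : 9 * C = a 2 - 2 * a 1 + a 0) (n : ℕ) :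
    a n = (a 0 - C) + (a 1 - a 0 + 3 * C) * n + C * (-2) ^ n := by
  induction n using Nat.strong_induction_on with
  | _ n ih =>
    match n, ih with
    | 0, _ => ring
    | 1, _ => push_cast; ring
    | 2, _ => push_cast; linear_combination -hC
    | n + 3, ih =>
      rw [h, ih (n + 1) (by omega), ih n (by omega)]
      push_cast; ring

lemma tendsto_affine_mul_geometric_half (A B : ℝ) :
    Tendsto (fun n : ℕ => (A + B * n) * (-1 / 2 : ℝ) ^ n) atTop (𝓝 0) := by
  have hr : ‖(-1 / 2 : ℝ)‖ < 1 := by norm_num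
  have hgeom := tendsto_pow_atTop_nhds_zero_of_norm_lt_one hr
  have hpoly : Tendsto (fun n : ℕ => (n : ℝ) ^ 1 * (-1 / 2 : ℝ) ^ n) atTop (𝓝 0) :=
    (summable_pow_mul_geometric_of_norm_lt_one 1 hr).tendsto_atTop_zero
  simpa [add_mul, mul_assoc] using (hgeom.const_mul A).add (hpoly.const_mul B)

lemma tendsto_div_neg_two_pow_of_recurrence {a : ℕ → ℝ}
    (h : ∀ n, a (n + 3) = 3 * a (n + 1) - 2 * a n) :
    Tendsto (fun n => a n / (-2) ^ n) atTop (𝓝 ((a 2 - 2 * a 1 + a 0) / 9)) := by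
  set C := (a 2 - 2 * a 1 + a 0) / 9
  have hC : 9 * C = a 2 - 2 * a 1 + a 0 := by ring
  have hlim := (tendsto_affine_mul_geometric_half (a 0 - C) (a 1 - a 0 + 3 * C)).add_const C
  rw [zero_add] at hlim
  refine hlim.congr fun n => ?_
  have hinv : (-1 / 2 : ℝ) ^ n = ((-2) ^ n)⁻¹ := by rw [← inv_pow]; norm_num
  have hpow : (-2 : ℝ) ^ n ≠ 0 := pow_ne_zero n (by norm_num)
  rw [eq_closedForm_of_recurrence h hC n, hinv]
  field_simp

lemma tendsto_succ_div_of_tendsto_div_pow {a : ℕ → ℝ} {r C : ℝ} (hr : r ≠ 0) (hC : C ≠ 0)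
    (h : Tendsto (fun n => a n / r ^ n) atTop (𝓝 C)) :
    Tendsto (fun n => a (n + 1) / a n) atTop (𝓝 r) := by
  have hsucc := (h.comp (tendsto_add_atTop_nat 1)).const_mul r
  have hlim := hsucc.div h hC
  rw [mul_div_cancel_right₀ r hC] at hlim
  refine hlim.congr fun n => ?_
  by_cases han : a n = 0
  · simp [han]
  · simp only [Pi.div_apply, Function.comp_apply, pow_succ]
    field_simp

lemma iterate_add_three_eq_of_mapsTo {I : Set ℝ} {g : ℝ → ℝ} (hmap : Set.MapsTo g I I)
    (heq : ∀ x ∈ I, g (g (g x)) = 3 * g x - 2 * x) {x : ℝ} (hx : x ∈ I) (n : ℕ) :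
    g^[n + 3] x = 3 * g^[n + 1] x - 2 * g^[n] x := by
  simp only [Function.iterate_succ_apply']
  exact heq _ (hmap.iterate n hx)

theorem stmt_9_general (I : Set ℝ)
    (g : ℝ → ℝ) (hmap : Set.MapsTo g I I)
    (heq : ∀ x ∈ I, g (g (g x)) = 3 * g x - 2 * x)
    (x : ℝ) (hx : x ∈ I) (hne : g (g x) - 2 * g x + x ≠ 0) :
    Filter.Tendsto (fun n : ℕ => g^[n + 4] x / g^[n + 3] x) Filter.atTop
      (nhds (-2)) := by
  have hC : (g^[2] x - 2 * g^[1] x + g^[0] x) / 9 ≠ 0 := by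
    simpa using hne
  have hratio := tendsto_succ_div_of_tendsto_div_pow (by norm_num) hC
    (tendsto_div_neg_two_pow_of_recurrence (a := fun n => g^[n] x)
      (iterate_add_three_eq_of_mapsTo hmap heq hx))
  exact (tendsto_add_atTop_iff_nat 3).2 hratio

/-- Let `g : I → I` be a continuous solution of `g∘g∘g (x) = 3 g(x) - 2 x` on a
nondegenerate interval `I ⊆ ℝ`. If `x ∈ I` satisfies `g(g x) - 2 g(x) + x ≠ 0`, then
`g^[n+4] x / g^[n+3] x → -2` as `n → ∞`. -/
theorem stmt_9 (I : Set ℝ) (hI : I.OrdConnected) (hnd : I.Nontrivial)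
    (g : ℝ → ℝ) (hmap : Set.MapsTo g I I) (hcont : ContinuousOn g I)
    (heq : ∀ x ∈ I, g (g (g x)) = 3 * g x - 2 * x)
    (x : ℝ) (hx : x ∈ I) (hne : g (g x) - 2 * g x + x ≠ 0) :
    Filter.Tendsto (fun n : ℕ => g^[n + 4] x / g^[n + 3] x) Filter.atTop
      (nhds (-2)) :=
  stmt_9_general I g hmap heq x hx hne
end

section
/- Let g : I → I be a continuous solution of g^3(x) = 3*g(x) - 2*x on a nondegenerate interval I ⊆ ℝ. If g is increasing on I, then g^{n+1}(x) - g^n(x) = g(x) - x for all n ≥ 1 and all x ∈ I. -/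
/-!
Along an orbit `aₘ = g^[m] x` the equation reads `aₘ₊₃ = 3aₘ₊₁ - 2aₘ`, so the steps
`bₘ = aₘ₊₁ - aₘ` satisfy `bₘ₊₂ + bₘ₊₁ = 2bₘ`, whose characteristic roots are `1` and `-2`:
`bₘ = c + d(-2)ᵐ`. Since `g` is increasing, the orbit is monotone, so all `bₘ` have one sign;
a nonzero `d(-2)ᵐ` term would eventually dominate and alternate in sign, hence `d = 0`.
-/

open Function Set

theorem MonotoneOn.monotone_or_antitone_iterate {α : Type*} [LinearOrder α] {f : α → α}
    {s : Set α} (hf : MonotoneOn f s) (hs : MapsTo f s s) {x : α} (hx : x ∈ s) :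
    Monotone (fun n => f^[n] x) ∨ Antitone (fun n => f^[n] x) := by
  have hF : Monotone hs.restrict := fun a b hab => hf a.2 b.2 hab
  have hcoe : (fun n => f^[n] x) = fun n => ((hs.restrict)^[n] ⟨x, hx⟩ : α) :=
    funext fun n => (hs.coe_iterate_restrict ⟨x, hx⟩ n).symm
  rw [hcoe]
  rcases le_total x (f x) with h | h
  · exact .inl <| (Subtype.mono_coe _).comp (hF.monotone_iterate_of_le_map (x := ⟨x, hx⟩) h)
  · exact .inr <|
      (Subtype.mono_coe _).comp_antitone (hF.antitone_iterate_of_map_le (x := ⟨x, hx⟩) h)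

theorem eq_apply_zero_of_nonneg_of_add_eq_two_mul {b : ℕ → ℝ}
    (hrec : ∀ m, b (m + 2) + b (m + 1) = 2 * b m)
    (hb : ∀ m, 0 ≤ b m) (m : ℕ) : b m = b 0 := by
  have hinv : ∀ m, b (m + 1) + 2 * b m = b 1 + 2 * b 0 := by
    intro m
    induction m with
    | zero => rfl
    | succ k ih => linarith [hrec k]
  have hdiff : ∀ m, b (m + 1) - b m = (-2) ^ m * (b 1 - b 0) := by
    intro m
    induction m with
    | zero => simp
    | succ k ih => linear_combination (-2 : ℝ) * ih + hrec k
  have hbound : ∀ m, 2 ^ m * |b 1 - b 0| ≤ b 1 + 2 * b 0 := by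
    intro m
    have habs : |b (m + 1) - b m| = 2 ^ m * |b 1 - b 0| := by
      rw [hdiff, abs_mul, abs_pow, abs_neg, abs_two]
    rw [← habs, abs_le]
    constructor <;> linarith [hinv m, hb m, hb (m + 1)]
  have h10 : b 1 = b 0 := by
    by_contra hne
    have hpos : 0 < |b 1 - b 0| := abs_pos.2 (sub_ne_zero.2 hne)
    obtain ⟨m, hm⟩ := pow_unbounded_of_one_lt ((b 1 + 2 * b 0) / |b 1 - b 0|) one_lt_two
    rw [div_lt_iff₀ hpos] at hm
    linarith [hbound m]
  induction m with
  | zero => rfl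
  | succ k ih => linarith [hinv k]

theorem Monotone.sub_eq_of_recurrence {a : ℕ → ℝ} (ha : Monotone a)
    (hrec : ∀ m, a (m + 3) = 3 * a (m + 1) - 2 * a m) (m : ℕ) :
    a (m + 1) - a m = a 1 - a 0 :=
  eq_apply_zero_of_nonneg_of_add_eq_two_mul (b := fun m => a (m + 1) - a m)
    (fun m => by linarith [hrec m]) (fun m => sub_nonneg.2 (ha m.le_succ)) m

theorem Antitone.sub_eq_of_recurrence {a : ℕ → ℝ} (ha : Antitone a)
    (hrec : ∀ m, a (m + 3) = 3 * a (m + 1) - 2 * a m) (m : ℕ) :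
    a (m + 1) - a m = a 1 - a 0 := by
  have := Monotone.sub_eq_of_recurrence (a := fun m => -a m) ha.neg
    (fun m => by linarith [hrec m]) m
  linarith

theorem stmt_10_general (I : Set ℝ)
    (g : ℝ → ℝ) (hmap : Set.MapsTo g I I)
    (heq : ∀ x ∈ I, g (g (g x)) = 3 * g x - 2 * x)
    (hmono : MonotoneOn g I) :
    ∀ n : ℕ, 1 ≤ n → ∀ x ∈ I, g^[n + 1] x - g^[n] x = g x - x := by
  intro n _ x hx
  have horbit : ∀ m, g^[m + 3] x = 3 * g^[m + 1] x - 2 * g^[m] x := fun m => by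
    simp only [iterate_succ_apply']
    exact heq _ (hmap.iterate m hx)
  rcases hmono.monotone_or_antitone_iterate hmap hx with h | h
  · simpa using h.sub_eq_of_recurrence horbit n
  · simpa using h.sub_eq_of_recurrence horbit n

/-- Let `g : I → I` be a continuous solution of `g∘g∘g (x) = 3 g(x) - 2 x` on a
nondegenerate interval `I ⊆ ℝ`. If `g` is increasing on `I`, then
`g^[n+1] x - g^[n] x = g x - x` for all `n ≥ 1` and all `x ∈ I`. -/
theorem stmt_10 (I : Set ℝ) (hI : I.OrdConnected) (hnd : I.Nontrivial)
    (g : ℝ → ℝ) (hmap : Set.MapsTo g I I) (hcont : ContinuousOn g I)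
    (heq : ∀ x ∈ I, g (g (g x)) = 3 * g x - 2 * x)
    (hmono : MonotoneOn g I) :
    ∀ n : ℕ, 1 ≤ n → ∀ x ∈ I, g^[n + 1] x - g^[n] x = g x - x :=
  stmt_10_general I g hmap heq hmono
end

section
/- Assume I ⊆ ℝ is a bounded nondegenerate interval. If g : I → I is a continuous solution of g^3(x) = 3*g(x) - 2*x on I, then g(x) = x for every x ∈ I. -/
/-! The orbit `xₙ = gⁿ(x)` stays in the bounded set `I` and satisfies the linear recurrence
`xₙ₊₃ = 3xₙ₊₁ - 2xₙ`, whose characteristic polynomial is `t³ - 3t + 2 = (t - 1)²(t + 2)`.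
So `xₙ = A + Bn + C(-2)ⁿ`, and boundedness forces `C = 0` and then `B = 0`: the orbit is
constant, in particular `g(x) = x`. -/

theorem eq_zero_of_abs_le_of_succ_eq_mul {r M : ℝ} (hr : 1 < |r|) {u : ℕ → ℝ}
    (hu : ∀ n, u (n + 1) = r * u n) (hM : ∀ n, |u n| ≤ M) : u = 0 := by
  have hpow : ∀ n, u n = r ^ n * u 0 := by
    intro n
    induction n with
    | zero => simp
    | succ n ih => rw [hu, ih, pow_succ]; ring
  suffices h0 : u 0 = 0 by
    funext n
    rw [hpow, h0, mul_zero, Pi.zero_apply]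
  by_contra h0
  have hpos : 0 < |u 0| := abs_pos.mpr h0
  obtain ⟨n, hn⟩ := pow_unbounded_of_one_lt (M / |u 0|) hr
  have : M < |u n| := by
    rw [hpow, abs_mul, abs_pow, ← div_lt_iff₀ hpos]
    exact hn
  exact (hM n).not_gt this

theorem eq_zero_of_abs_le_of_succ_eq_add {c M : ℝ} {u : ℕ → ℝ}
    (hu : ∀ n, u (n + 1) = u n + c) (hM : ∀ n, |u n| ≤ M) : c = 0 := by
  have hlin : ∀ n : ℕ, u n = u 0 + n * c := by
    intro n
    induction n with
    | zero => simp
    | succ n ih => rw [hu, ih]; push_cast; ring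
  by_contra hc
  have hpos : 0 < |c| := abs_pos.mpr hc
  obtain ⟨n, hn⟩ := exists_nat_gt (2 * M / |c|)
  have hle : (n : ℝ) * |c| ≤ 2 * M :=
    calc (n : ℝ) * |c| = |u n - u 0| := by
          rw [hlin, add_sub_cancel_left, abs_mul, Nat.abs_cast]
      _ ≤ |u n| + |u 0| := abs_sub _ _
      _ ≤ 2 * M := by linarith [hM n, hM 0]
  rw [div_lt_iff₀ hpos] at hn
  linarith

theorem eq_of_abs_le_of_add_three_eq_three_mul_sub_two_mul {M : ℝ} {a : ℕ → ℝ}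
    (ha : ∀ n, a (n + 3) = 3 * a (n + 1) - 2 * a n) (hM : ∀ n, |a n| ≤ M) : a 1 = a 0 := by
  set e : ℕ → ℝ := fun n => a (n + 2) - 2 * a (n + 1) + a n with he
  have he_succ : ∀ n, e (n + 1) = -2 * e n := fun n => by
    simp only [he, ha n]; ring
  have he_bdd : ∀ n, |e n| ≤ 4 * M := fun n =>
    calc |e n| ≤ |a (n + 2)| + |2 * a (n + 1)| + |a n| := by
          simpa only [he, sub_eq_add_neg, abs_neg] using abs_add_three _ (-(2 * a (n + 1))) _
      _ ≤ 4 * M := by rw [abs_mul, abs_two]; linarith [hM n, hM (n + 1), hM (n + 2)]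
  have he_zero : e = 0 :=
    eq_zero_of_abs_le_of_succ_eq_mul (by norm_num) he_succ he_bdd
  have hdiff : ∀ n, a (n + 1) - a n = a 1 - a 0 := by
    intro n
    induction n with
    | zero => rfl
    | succ n ih =>
      have hen : a (n + 2) - 2 * a (n + 1) + a n = 0 := congrFun he_zero n
      linarith
  have := eq_zero_of_abs_le_of_succ_eq_add (c := a 1 - a 0) (fun n => by linarith [hdiff n]) hM
  linarith

theorem stmt_11_general (I : Set ℝ)
    (hbdd : Bornology.IsBounded I)
    (g : ℝ → ℝ) (hmap : Set.MapsTo g I I)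
    (heq : ∀ x ∈ I, g (g (g x)) = 3 * g x - 2 * x) :
    ∀ x ∈ I, g x = x := by
  obtain ⟨M, hM⟩ := hbdd.exists_norm_le
  intro x hx
  have horbit : ∀ n, g^[n] x ∈ I := fun n => hmap.iterate n hx
  have hrec : ∀ n, g^[n + 3] x = 3 * g^[n + 1] x - 2 * g^[n] x := fun n => by
    simp only [Function.iterate_succ_apply']
    exact heq _ (horbit n)
  simpa using eq_of_abs_le_of_add_three_eq_three_mul_sub_two_mul hrec fun n => hM _ (horbit n)

/-- If `I ⊆ ℝ` is a bounded nondegenerate interval and `g : I → I` is a continuous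
solution of `g∘g∘g (x) = 3 g(x) - 2 x` on `I`, then `g = id` on `I`. -/
theorem stmt_11 (I : Set ℝ) (hI : I.OrdConnected) (hnd : I.Nontrivial)
    (hbdd : Bornology.IsBounded I)
    (g : ℝ → ℝ) (hmap : Set.MapsTo g I I) (hcont : ContinuousOn g I)
    (heq : ∀ x ∈ I, g (g (g x)) = 3 * g x - 2 * x) :
    ∀ x ∈ I, g x = x :=
  stmt_11_general I hbdd g hmap heq
end

section
/- Assume I ⊆ ℝ is a half-line (an unbounded interval different from ℝ, i.e., bounded below and unbounded above, or bounded above and unbounded below). If g : I → I is a continuous solution of g^3(x) = 3*g(x) - 2*x on I, then there exists c ∈ ℝ such that g(x) = x + c for every x ∈ I; moreover c ≤ 0 if I is unbounded below and c ≥ 0 if I is unbounded above. -/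
/-!
Along an orbit `u n = g^[n] x` the equation becomes the recurrence `u (n+3) = 3 u (n+1) - 2 u n`,
so `u n = A + B n + D (-2)^n`. If `I` is bounded below, so is the orbit, which forces `D = 0` and
`B ≥ 0`, i.e. `g (g x) = 2 g x - x` and `x ≤ g x`. Hence `h x = g x - x` is `g`-invariant and
`g^[n] x = x + n h x`. The identity `g ∘ g = 2 g - id` makes `g` injective, hence increasing
(it is continuous and `g x ≥ x` on an interval unbounded above), and comparing `g^[n] a ≤ g^[n] b`
for large `n` shows that `h` is nondecreasing. If `h a > 0`, the orbit of `a` tends to `+∞` with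
`h` constant along it, so `h ≤ h a` everywhere; with the intermediate value theorem this excludes
`h` vanishing at one point but not at another, so `h` is constant. The case of `I` bounded above
follows by conjugating with `x ↦ -x`.
-/

open Set Filter Topology

lemma nonpos_of_forall_nat_mul_le {a b : ℝ} (h : ∀ n : ℕ, a * n ≤ b) : a ≤ 0 := by
  by_contra! ha
  obtain ⟨n, hn⟩ := exists_nat_gt (b / a)
  have := h n
  rw [div_lt_iff₀ ha] at hn
  linarith

lemma nonpos_of_forall_mul_pow_le {r a b c : ℝ} (hr : 1 < r)
    (h : ∀ n : ℕ, a * r ^ n ≤ b + c * n) : a ≤ 0 := by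
  have hlim : Tendsto (fun n : ℕ ↦ b * (r ^ n)⁻¹ + c * ((n : ℝ) / r ^ n)) atTop (𝓝 0) := by
    simpa using ((tendsto_inv_atTop_zero.comp (tendsto_pow_atTop_atTop_of_one_lt hr)).const_mul b).add
      ((tendsto_pow_const_div_const_pow_of_one_lt 1 hr).const_mul c)
  refine ge_of_tendsto' hlim fun n ↦ ?_
  have hrn : 0 < r ^ n := pow_pos (by linarith) n
  rw [← div_eq_mul_inv, mul_div_assoc', ← add_div, le_div_iff₀ hrn]
  exact h n

lemma exists_closed_form {u : ℕ → ℝ} (hu : ∀ n, u (n + 3) = 3 * u (n + 1) - 2 * u n) :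
    ∃ A B D : ℝ, ∀ n, u n = A + B * n + D * (-2) ^ n := by
  -- `1, 1, -2` are the roots of `t ^ 3 - 3 t + 2`; the constants solve the system at `n = 0, 1, 2`.
  set D := (u 0 - 2 * u 1 + u 2) / 9
  refine ⟨u 0 - D, u 1 - u 0 + 3 * D, D, fun n ↦ ?_⟩
  set w : ℕ → ℝ := fun n ↦ u 0 - D + (u 1 - u 0 + 3 * D) * n + D * (-2) ^ n
  suffices ∀ n, u n = w n ∧ u (n + 1) = w (n + 1) ∧ u (n + 2) = w (n + 2) from (this n).1
  intro n
  induction n with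
  | zero => refine ⟨?_, ?_, ?_⟩ <;> simp only [w, D] <;> push_cast <;> ring
  | succ n ih =>
    refine ⟨ih.2.1, ih.2.2, ?_⟩
    rw [hu, ih.1, ih.2.1]
    simp only [w]
    push_cast
    ring

lemma closed_form_bddBelow {A B D : ℝ}
    (h : BddBelow (range fun n : ℕ ↦ A + B * n + D * (-2) ^ n)) : D = 0 ∧ 0 ≤ B := by
  obtain ⟨m, hm⟩ := h
  have hm' : ∀ n : ℕ, m ≤ A + B * n + D * (-2) ^ n := fun n ↦ hm ⟨n, rfl⟩
  have hD_le : 2 * D ≤ 0 :=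
    nonpos_of_forall_mul_pow_le (r := 4) (b := A + B - m) (c := 2 * B) (by norm_num) fun k ↦ by
      have := hm' (2 * k + 1)
      rw [pow_succ, pow_mul] at this
      norm_num at this
      linarith
  have hD_ge : -D ≤ 0 :=
    nonpos_of_forall_mul_pow_le (r := 4) (b := A - m) (c := 2 * B) (by norm_num) fun k ↦ by
      have := hm' (2 * k)
      rw [pow_mul] at this
      norm_num at this
      linarith
  have hD : D = 0 := by linarith
  have hB : -B ≤ 0 := nonpos_of_forall_nat_mul_le (b := A - m) fun n ↦ by
    have := hm' n
    rw [hD] at this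
    linarith
  exact ⟨hD, by linarith⟩

lemma second_diff_eq_zero_and_le_of_bddBelow {u : ℕ → ℝ}
    (hu : ∀ n, u (n + 3) = 3 * u (n + 1) - 2 * u n) (hb : BddBelow (range u)) :
    u 2 - 2 * u 1 + u 0 = 0 ∧ u 0 ≤ u 1 := by
  obtain ⟨A, B, D, hABD⟩ := exists_closed_form hu
  rw [show u = _ from funext hABD] at hb
  obtain ⟨rfl, hB⟩ := closed_form_bddBelow hb
  simp only [hABD]
  norm_num
  exact ⟨by ring, hB⟩

section

variable {I : Set ℝ} {g : ℝ → ℝ}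

lemma iterate_add_three (hmap : MapsTo g I I) (heq : ∀ x ∈ I, g (g (g x)) = 3 * g x - 2 * x)
    {x : ℝ} (hx : x ∈ I) (n : ℕ) : g^[n + 3] x = 3 * g^[n + 1] x - 2 * g^[n] x := by
  simp only [Function.iterate_succ_apply']
  exact heq _ (hmap.iterate n hx)

lemma comp_self_eq_and_le_of_bddBelow (hbdd : BddBelow I) (hmap : MapsTo g I I)
    (heq : ∀ x ∈ I, g (g (g x)) = 3 * g x - 2 * x) {x : ℝ} (hx : x ∈ I) :
    g (g x) = 2 * g x - x ∧ x ≤ g x := by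
  have hb : BddBelow (range fun n ↦ g^[n] x) :=
    hbdd.mono (range_subset_iff.2 fun n ↦ hmap.iterate n hx)
  obtain ⟨h2, h1⟩ := second_diff_eq_zero_and_le_of_bddBelow (iterate_add_three hmap heq hx) hb
  simp only [Function.iterate_succ_apply', Function.iterate_zero_apply] at h2 h1
  exact ⟨by linarith, h1⟩

lemma iterate_eq_add_mul (hmap : MapsTo g I I) (hgg : ∀ x ∈ I, g (g x) = 2 * g x - x) (n : ℕ) :
    ∀ x ∈ I, g^[n] x = x + n * (g x - x) := by
  induction n with
  | zero => simp
  | succ n ih =>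
    intro x hx
    rw [Function.iterate_succ_apply, ih (g x) (hmap hx), hgg x hx]
    push_cast
    ring

lemma injOn_of_comp_self_eq (hgg : ∀ x ∈ I, g (g x) = 2 * g x - x) : InjOn g I := by
  intro a ha b hb hab
  have := hgg a ha
  rw [hab, hgg b hb] at this
  linarith

lemma monotoneOn_of_comp_self_eq (hI : I.OrdConnected) (hunb : ¬BddAbove I)
    (hcont : ContinuousOn g I) (hgg : ∀ x ∈ I, g (g x) = 2 * g x - x)
    (hle : ∀ x ∈ I, x ≤ g x) : MonotoneOn g I := by
  intro a ha b hb hab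
  obtain ⟨z, hz, hbz⟩ := not_bddAbove_iff.1 hunb (max b (g a))
  rw [max_lt_iff] at hbz
  have hsub : Icc a z ⊆ I := hI.out ha hz
  have hmono : StrictMonoOn g (Icc a z) :=
    ContinuousOn.strictMonoOn_of_injOn_Icc (by linarith) (by linarith [hle z hz])
      (hcont.mono hsub) ((injOn_of_comp_self_eq hgg).mono hsub)
  exact hmono.monotoneOn ⟨le_rfl, by linarith⟩ ⟨hab, hbz.1.le⟩ hab

lemma MonotoneOn.iterate_of_mapsTo (hg : MonotoneOn g I) (hmap : MapsTo g I I) (n : ℕ) :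
    MonotoneOn g^[n] I := by
  induction n with
  | zero => exact monotoneOn_id
  | succ n ih =>
    rw [Function.iterate_succ']
    exact hg.comp ih (hmap.iterate n)

lemma monotoneOn_sub_self (hmap : MapsTo g I I) (hgg : ∀ x ∈ I, g (g x) = 2 * g x - x)
    (hg : MonotoneOn g I) : MonotoneOn (fun x ↦ g x - x) I := by
  intro a ha b hb hab
  refine sub_nonpos.1 (nonpos_of_forall_nat_mul_le (b := b - a) fun n ↦ ?_)
  have := hg.iterate_of_mapsTo hmap n ha hb hab
  rw [iterate_eq_add_mul hmap hgg n a ha, iterate_eq_add_mul hmap hgg n b hb] at this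
  linarith

lemma sub_self_le_of_pos (hmap : MapsTo g I I) (hgg : ∀ x ∈ I, g (g x) = 2 * g x - x)
    (hh : MonotoneOn (fun x ↦ g x - x) I) {a b : ℝ} (ha : a ∈ I) (hb : b ∈ I)
    (hpos : 0 < g a - a) : g b - b ≤ g a - a := by
  obtain ⟨n, hn⟩ := exists_nat_gt ((b - a) / (g a - a))
  rw [div_lt_iff₀ hpos] at hn
  have hform := iterate_eq_add_mul hmap hgg
  have hbn : b ≤ g^[n] a := by rw [hform n a ha]; linarith
  have hinv : g (g^[n] a) - g^[n] a = g a - a := by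
    rw [← Function.iterate_succ_apply' g n, hform (n + 1) a ha, hform n a ha]
    push_cast
    ring
  exact hinv ▸ hh hb (hmap.iterate n ha) hbn

lemma sub_self_eq_of_pos (hI : I.OrdConnected) (hmap : MapsTo g I I) (hcont : ContinuousOn g I)
    (hgg : ∀ x ∈ I, g (g x) = 2 * g x - x) (hh : MonotoneOn (fun x ↦ g x - x) I)
    {a b : ℝ} (ha : a ∈ I) (hb : b ∈ I) (hpos : 0 < g b - b) : g a - a = g b - b := by
  suffices hapos : 0 < g a - a from
    le_antisymm (sub_self_le_of_pos hmap hgg hh hb ha hpos) (sub_self_le_of_pos hmap hgg hh ha hb hapos)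
  rcases le_or_gt b a with hba | hab
  · exact hpos.trans_le (hh hb ha hba)
  by_contra! hnpos
  have hsub : Icc a b ⊆ I := hI.out ha hb
  obtain ⟨t, ht, hteq⟩ := intermediate_value_Icc hab.le ((hcont.mono hsub).sub continuousOn_id)
    (show (g b - b) / 2 ∈ Icc (g a - a) (g b - b) from ⟨by linarith, by linarith⟩)
  replace hteq : g t - t = (g b - b) / 2 := hteq
  have := sub_self_le_of_pos hmap hgg hh (hsub ht) hb (by linarith)
  linarith

theorem exists_add_const_of_bddBelow (hI : I.OrdConnected) (hbdd : BddBelow I)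
    (hunb : ¬BddAbove I) (hmap : MapsTo g I I) (hcont : ContinuousOn g I)
    (heq : ∀ x ∈ I, g (g (g x)) = 3 * g x - 2 * x) :
    ∃ c, 0 ≤ c ∧ ∀ x ∈ I, g x = x + c := by
  have hgg x hx := (comp_self_eq_and_le_of_bddBelow hbdd hmap heq (x := x) hx).1
  have hle x hx := (comp_self_eq_and_le_of_bddBelow hbdd hmap heq (x := x) hx).2
  have hh := monotoneOn_sub_self hmap hgg (monotoneOn_of_comp_self_eq hI hunb hcont hgg hle)
  obtain ⟨x₀, hx₀⟩ := nonempty_of_not_bddAbove hunb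
  refine ⟨g x₀ - x₀, sub_nonneg.2 (hle x₀ hx₀), fun x hx ↦ ?_⟩
  suffices g x - x = g x₀ - x₀ by linarith
  rcases (sub_nonneg.2 (hle x₀ hx₀)).eq_or_lt with h0 | hpos
  · rcases (sub_nonneg.2 (hle x hx)).eq_or_lt with h0' | hpos'
    · linarith
    · exact (sub_self_eq_of_pos hI hmap hcont hgg hh hx₀ hx hpos').symm
  · exact sub_self_eq_of_pos hI hmap hcont hgg hh hx hx₀ hpos

open Pointwise in
theorem exists_add_const_of_bddAbove (hI : I.OrdConnected) (hbdd : BddAbove I)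
    (hunb : ¬BddBelow I) (hmap : MapsTo g I I) (hcont : ContinuousOn g I)
    (heq : ∀ x ∈ I, g (g (g x)) = 3 * g x - 2 * x) :
    ∃ c ≤ 0, ∀ x ∈ I, g x = x + c := by
  obtain ⟨c, hc, hgc⟩ := exists_add_const_of_bddBelow (I := -I) (g := fun x ↦ -g (-x))
    (hI.preimage_anti fun _ _ ↦ neg_le_neg) (bddBelow_neg.2 hbdd) (mt bddAbove_neg.1 hunb)
    (fun x hx ↦ by simpa using hmap hx)
    (hcont.comp continuousOn_neg fun _ hx ↦ hx).neg
    (fun x hx ↦ by simp only [neg_neg]; rw [heq _ hx]; ring)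
  refine ⟨-c, by linarith, fun x hx ↦ ?_⟩
  have := hgc (-x) (by simpa using hx)
  simp only [neg_neg] at this
  linarith

end

theorem stmt_12_general (I : Set ℝ) (hI : I.OrdConnected)
    (hhalf : (BddBelow I ∧ ¬BddAbove I) ∨ (BddAbove I ∧ ¬BddBelow I))
    (g : ℝ → ℝ) (hmap : Set.MapsTo g I I) (hcont : ContinuousOn g I)
    (heq : ∀ x ∈ I, g (g (g x)) = 3 * g x - 2 * x) :
    ∃ c : ℝ, (∀ x ∈ I, g x = x + c) ∧
      (¬BddBelow I → c ≤ 0) ∧ (¬BddAbove I → 0 ≤ c) := by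
  rcases hhalf with ⟨hbdd, hunb⟩ | ⟨hbdd, hunb⟩
  · obtain ⟨c, hc, hgc⟩ := exists_add_const_of_bddBelow hI hbdd hunb hmap hcont heq
    exact ⟨c, hgc, fun h ↦ absurd hbdd h, fun _ ↦ hc⟩
  · obtain ⟨c, hc, hgc⟩ := exists_add_const_of_bddAbove hI hbdd hunb hmap hcont heq
    exact ⟨c, hgc, fun _ ↦ hc, fun h ↦ absurd hbdd h⟩

/-- If `I ⊆ ℝ` is a half-line (bounded below and unbounded above, or bounded above and
unbounded below) and `g : I → I` is a continuous solution of `g∘g∘g (x) = 3 g(x) - 2 x`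
on `I`, then `g(x) = x + c` on `I` for some `c ∈ ℝ`; moreover `c ≤ 0` if `I` is
unbounded below and `c ≥ 0` if `I` is unbounded above. -/
theorem stmt_12 (I : Set ℝ) (hI : I.OrdConnected) (hnd : I.Nontrivial)
    (hhalf : (BddBelow I ∧ ¬BddAbove I) ∨ (BddAbove I ∧ ¬BddBelow I))
    (g : ℝ → ℝ) (hmap : Set.MapsTo g I I) (hcont : ContinuousOn g I)
    (heq : ∀ x ∈ I, g (g (g x)) = 3 * g x - 2 * x) :
    ∃ c : ℝ, (∀ x ∈ I, g x = x + c) ∧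
      (¬BddBelow I → c ≤ 0) ∧ (¬BddAbove I → 0 ≤ c) :=
  stmt_12_general I hI hhalf g hmap hcont heq
end

section
/- If g : ℝ → ℝ is a continuous function satisfying g^3(x) = 3*g(x) - 2*x for all x ∈ ℝ, then there exists c ∈ ℝ such that either g(x) = x + c for every x ∈ ℝ, or g(x) = -2*x + c for every x ∈ ℝ. -/
/-!
An injective continuous `g` is strictly monotone, and every orbit of `g` satisfies
`x (n + 3) = 3 x (n + 1) - 2 x n`, whose characteristic polynomial is `(t - 1)² (t + 2)`.

If `g` is increasing, its orbits are monotone, which rules out the `(-2)ⁿ` mode: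
`g ∘ g - 2 g + id = 0`. Then `u = g - id` is constant along orbits, so `gⁿ x = x + n u x`, which
makes `u` monotone; a continuous monotone `u` with this invariance is constant.

If `g` is decreasing, it is bijective and its backward orbits alternate. Backward, the recurrence
has roots `1, 1, -1/2`, and alternation rules out the linear mode: `g ∘ g + g - 2 id = 0`.
Backward orbits now converge, to a fixed point of `g`, and `g + 2 id` is constant along them; as a
decreasing `g` has only one fixed point, `g + 2 id` is constant.
-/

open Filter Topology Function

section Recurrence

variable {d : ℕ → ℝ}

theorem tendsto_of_add_eq_two_mul (hrec : ∀ n, d n + d (n + 1) = 2 * d (n + 2)) :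
    Tendsto d atTop (𝓝 ((d 0 + 2 * d 1) / 3)) := by
  have hinv : ∀ n, d n + 2 * d (n + 1) = d 0 + 2 * d 1 := by
    intro n
    induction n with
    | zero => rfl
    | succ n ih => linarith [hrec n]
  have hdiff : ∀ n, d (n + 1) - d n = (-1 / 2) ^ n * (d 1 - d 0) := by
    intro n
    induction n with
    | zero => simp
    | succ n ih => rw [pow_succ]; linarith [hrec n]
  have hform : ∀ n, (d 0 + 2 * d 1 - 2 * ((-1 / 2) ^ n * (d 1 - d 0))) / 3 = d n := by
    intro n; linarith [hinv n, hdiff n]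
  have hgeom : Tendsto (fun n : ℕ => (-1 / 2 : ℝ) ^ n) atTop (𝓝 0) :=
    tendsto_pow_atTop_nhds_zero_of_abs_lt_one (by norm_num [abs_div])
  refine Tendsto.congr hform ?_
  simpa using ((hgeom.mul_const (d 1 - d 0)).const_mul 2).const_sub (d 0 + 2 * d 1) |>.div_const 3

theorem add_two_mul_eq_zero_of_mul_nonpos (hrec : ∀ n, d n + d (n + 1) = 2 * d (n + 2))
    (hsign : ∀ n, d n * d (n + 1) ≤ 0) : d 0 + 2 * d 1 = 0 := by
  have hlim := tendsto_of_add_eq_two_mul hrec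
  have hsq : ((d 0 + 2 * d 1) / 3) * ((d 0 + 2 * d 1) / 3) ≤ 0 :=
    le_of_tendsto' (hlim.mul (hlim.comp (tendsto_add_atTop_nat 1))) hsign
  nlinarith [mul_self_nonneg ((d 0 + 2 * d 1) / 3)]

theorem eq_of_add_eq_two_mul_of_mul_nonneg (hrec : ∀ n, d (n + 2) + d (n + 1) = 2 * d n)
    (hsign : ∀ n, 0 ≤ d n * d (n + 1)) : d 1 = d 0 := by
  have hinv : ∀ n, d (n + 1) + 2 * d n = d 1 + 2 * d 0 := by
    intro n
    induction n with
    | zero => rfl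
    | succ n ih => linarith [hrec n]
  have hdiff : ∀ n, d (n + 1) - d n = (-2) ^ n * (d 1 - d 0) := by
    intro n
    induction n with
    | zero => simp
    | succ n ih => rw [pow_succ]; linarith [hrec n]
  -- `3 d n = s - t` and `3 d (n + 1) = s + 2 t` have opposite signs once `|t| > |s|`
  by_contra hne
  set s := d 1 + 2 * d 0
  have he : 0 < |d 1 - d 0| := abs_pos.mpr (sub_ne_zero.mpr hne)
  obtain ⟨n, hn⟩ := pow_unbounded_of_one_lt (|s| / |d 1 - d 0|) one_lt_two
  set t := (-2 : ℝ) ^ n * (d 1 - d 0)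
  have hst : |s| < |t| := by
    rw [abs_mul, abs_pow, abs_neg, abs_two]
    rwa [div_lt_iff₀ he] at hn
  have hdn : 3 * d n = s - t := by linarith [hinv n, hdiff n]
  have hdn' : 3 * d (n + 1) = s + 2 * t := by linarith [hinv n, hdiff n]
  have hss : s * s < t * t := by nlinarith [abs_mul_abs_self s, abs_mul_abs_self t, abs_nonneg s]
  have hst' : s * t < t * t := by
    nlinarith [abs_mul_abs_self t, abs_nonneg s, abs_mul s t, le_abs_self (s * t)]
  have hprod : 9 * (d n * d (n + 1)) = (s - t) * (s + 2 * t) := by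
    rw [← hdn, ← hdn']; ring
  nlinarith [hsign n]

end Recurrence

section Invariant

variable {u : ℝ → ℝ}

theorem le_of_invariant_of_pos (hmono : Monotone u) (hinv : ∀ x (n : ℕ), u (x + n * u x) = u x)
    {z : ℝ} (hz : 0 < u z) (y : ℝ) : u y ≤ u z := by
  rcases le_total y z with hyz | hzy
  · exact hmono hyz
  obtain ⟨n, hn⟩ := exists_nat_ge ((y - z) / u z)
  rw [div_le_iff₀ hz] at hn
  calc u y ≤ u (z + n * u z) := hmono (by linarith)
    _ = u z := hinv z n

theorem le_of_invariant_of_neg (hmono : Monotone u) (hinv : ∀ x (n : ℕ), u (x + n * u x) = u x)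
    {z : ℝ} (hz : u z < 0) (y : ℝ) : u z ≤ u y := by
  have hmono' : Monotone fun x => -u (-x) := fun a b hab => neg_le_neg (hmono (neg_le_neg hab))
  have hinv' : ∀ x (n : ℕ), -u (-(x + n * -u (-x))) = -u (-x) := by
    intro x n
    rw [show -(x + n * -u (-x)) = -x + n * u (-x) by ring, hinv]
  simpa using le_of_invariant_of_pos hmono' hinv' (z := -z) (by simpa using hz) (-y)

-- A nonconstant `u` takes a nonzero value `u z` strictly between two of its values, while the
-- two lemmas above make `u z` the maximum or the minimum of `u`.
theorem eq_of_monotone_of_invariant (hcont : Continuous u) (hmono : Monotone u)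
    (hinv : ∀ x (n : ℕ), u (x + n * u x) = u x) (a b : ℝ) : u a = u b := by
  wlog hab : u a < u b generalizing a b
  · rcases (not_lt.mp hab).lt_or_eq with h | h
    · exact (this b a h).symm
    · exact h.symm
  have hne : (2 * u a + u b) / 3 ≠ 0 ∨ (u a + 2 * u b) / 3 ≠ 0 := by
    by_contra! h; linarith [h.1, h.2]
  obtain ⟨v, hv0, hav, hvb⟩ : ∃ v, v ≠ 0 ∧ u a < v ∧ v < u b := by
    rcases hne with h | h
    · exact ⟨_, h, by linarith, by linarith⟩
    · exact ⟨_, h, by linarith, by linarith⟩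
  obtain ⟨z, rfl⟩ := intermediate_value_univ a b hcont ⟨hav.le, hvb.le⟩
  rcases hv0.lt_or_gt with hneg | hpos
  · linarith [le_of_invariant_of_neg hmono hinv hneg a]
  · linarith [le_of_invariant_of_pos hmono hinv hpos b]

end Invariant

section Orbits

variable {g : ℝ → ℝ}

theorem apply_apply_sub_apply_of_monotone (hmono : Monotone g)
    (heq : ∀ x, g (g (g x)) = 3 * g x - 2 * x) (x : ℝ) : g (g x) - g x = g x - x := by
  set d : ℕ → ℝ := fun n => g^[n + 1] x - g^[n] x
  have hsucc : ∀ n, g^[n + 1] x = g (g^[n] x) := fun n => iterate_succ_apply' g n x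
  have hrec : ∀ n, d (n + 2) + d (n + 1) = 2 * d n := by
    intro n
    have := heq (g^[n] x)
    simp only [d, hsucc] at this ⊢
    linarith
  have hsign : ∀ n, 0 ≤ d n * d (n + 1) := by
    intro n
    have := (hmono.monovary monotone_id).sub_mul_sub_nonneg (g^[n] x) (g^[n + 1] x)
    simp only [d, hsucc, id_eq] at this ⊢
    linarith
  simpa [d] using eq_of_add_eq_two_mul_of_mul_nonneg hrec hsign

theorem surjective_of_antitone (hcont : Continuous g) (hanti : Antitone g)
    (heq : ∀ x, g (g (g x)) = 3 * g x - 2 * x) : Surjective g := by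
  have hsurj : Surjective fun x => 3 * g x - 2 * x := by
    refine Continuous.surjective' (by fun_prop) ?_ ?_
    · refine tendsto_atBot_atTop.2 fun b => ⟨min 0 ((3 * g 0 - b) / 2), fun x hx => ?_⟩
      linarith [hanti (hx.trans (min_le_left _ _)), min_le_right 0 ((3 * g 0 - b) / 2)]
    · refine tendsto_atTop_atBot.2 fun b => ⟨max 0 ((3 * g 0 - b) / 2), fun x hx => ?_⟩
      linarith [hanti ((le_max_left _ _).trans hx), le_max_right 0 ((3 * g 0 - b) / 2)]
  intro y
  obtain ⟨x, rfl⟩ := hsurj y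
  exact ⟨g (g x), heq x⟩

theorem apply_apply_add_apply_of_strictAnti (hanti : StrictAnti g) (hsurj : Surjective g)
    (heq : ∀ x, g (g (g x)) = 3 * g x - 2 * x) (x : ℝ) : g (g x) + g x = 2 * x := by
  have hbij : Bijective g := ⟨hanti.injective, hsurj⟩
  set y : ℕ → ℝ := fun n => (Equiv.ofBijective g hbij).symm^[n] (g (g x))
  have hy : ∀ n, g (y (n + 1)) = y n := fun n => by
    simp only [y, iterate_succ_apply', Equiv.ofBijective_apply_symm_apply]
  have hy1 : y 1 = g x := hbij.injective (by rw [hy 0]; rfl)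
  have hy2 : y 2 = x := hbij.injective (by rw [hy 1, hy1])
  set d : ℕ → ℝ := fun n => y (n + 1) - y n
  have hrec : ∀ n, d n + d (n + 1) = 2 * d (n + 2) := by
    intro n
    have := heq (y (n + 3))
    simp only [d, hy] at this ⊢
    linarith
  have hsign : ∀ n, d n * d (n + 1) ≤ 0 := by
    intro n
    have := (hanti.antitone.antivary monotone_id).sub_mul_sub_nonpos (y (n + 1)) (y (n + 2))
    simp only [d, hy, id_eq] at this ⊢
    linarith
  have := add_two_mul_eq_zero_of_mul_nonpos hrec hsign
  simp only [d, hy1, hy2] at this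
  have hy0 : y 0 = g (g x) := rfl
  linarith

theorem exists_eq_add_const (hcont : Continuous g) (hmono : Monotone g)
    (h2 : ∀ x, g (g x) - g x = g x - x) : ∃ c, ∀ x, g x = x + c := by
  set u := fun x => g x - x
  have hu : ∀ (n : ℕ) x, u (g^[n] x) = u x := by
    intro n
    induction n with
    | zero => simp
    | succ n ih => intro x; rw [iterate_succ_apply, ih]; exact h2 x
  have hiter : ∀ (n : ℕ) x, g^[n] x = x + n * u x := by
    intro n
    induction n with
    | zero => simp
    | succ n ih =>
      intro x
      have hstep : g^[n + 1] x = g^[n] x + u (g^[n] x) := by simp [u, iterate_succ_apply']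
      rw [hstep, hu, ih]
      push_cast
      ring
  have hinv : ∀ x (n : ℕ), u (x + n * u x) = u x := fun x n => by
    rw [← hiter, hu]
  have humono : Monotone u := by
    intro a b hab
    by_contra! hlt
    obtain ⟨n, hn⟩ := exists_nat_gt ((b - a) / (u a - u b))
    rw [div_lt_iff₀ (sub_pos.mpr hlt)] at hn
    have := hmono.iterate n hab
    rw [hiter, hiter] at this
    nlinarith
  refine ⟨g 0, fun x => ?_⟩
  have : g x - x = g 0 - 0 := eq_of_monotone_of_invariant (by fun_prop) humono hinv x 0
  linarith

theorem exists_eq_neg_two_mul_add_const (hcont : Continuous g) (hanti : StrictAnti g)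
    (hsurj : Surjective g) (h2 : ∀ x, g (g x) + g x = 2 * x) :
    ∃ c, ∀ x, g x = -2 * x + c := by
  have hbij : Bijective g := ⟨hanti.injective, hsurj⟩
  -- `(g x + 2 x) / 3` is the limit of the backward orbit of `g x`, hence a fixed point of `g`
  have hfix : ∀ x, g ((g x + 2 * x) / 3) = (g x + 2 * x) / 3 := by
    intro x
    set y : ℕ → ℝ := fun n => (Equiv.ofBijective g hbij).symm^[n] (g x)
    have hy : ∀ n, g (y (n + 1)) = y n := fun n => by
      simp only [y, iterate_succ_apply', Equiv.ofBijective_apply_symm_apply]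
    have hy1 : y 1 = x := hbij.injective (by rw [hy 0]; rfl)
    have hrec : ∀ n, y n + y (n + 1) = 2 * y (n + 2) := fun n => by
      rw [← h2 (y (n + 2)), hy, hy]
    have hlim := tendsto_of_add_eq_two_mul hrec
    rw [hy1] at hlim
    refine tendsto_nhds_unique ((hcont.tendsto _).comp (hlim.comp (tendsto_add_atTop_nat 1))) ?_
    exact hlim.congr fun n => (hy n).symm
  refine ⟨g 0, fun x => ?_⟩
  have hunique : (g x + 2 * x) / 3 = (g 0 + 2 * 0) / 3 := by
    by_contra hne
    rcases lt_or_gt_of_ne hne with h | h <;> linarith [hanti h, hfix x, hfix 0]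
  linarith

end Orbits

/-- If `g : ℝ → ℝ` is a continuous solution of `g∘g∘g (x) = 3 g(x) - 2 x` on `ℝ`, then
there is `c ∈ ℝ` such that either `g(x) = x + c` for all `x`, or `g(x) = -2x + c`
for all `x`. -/
theorem stmt_13 (g : ℝ → ℝ) (hcont : Continuous g)
    (heq : ∀ x : ℝ, g (g (g x)) = 3 * g x - 2 * x) :
    ∃ c : ℝ, (∀ x : ℝ, g x = x + c) ∨ (∀ x : ℝ, g x = -2 * x + c) := by
  have hinj : Injective g := fun a b hab => by
    have := heq a
    rw [hab, heq b] at this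
    linarith
  rcases hcont.strictMono_of_inj hinj with hmono | hanti
  · obtain ⟨c, hc⟩ := exists_eq_add_const hcont hmono.monotone
      (apply_apply_sub_apply_of_monotone hmono.monotone heq)
    exact ⟨c, Or.inl hc⟩
  · have hsurj := surjective_of_antitone hcont hanti.antitone heq
    obtain ⟨c, hc⟩ := exists_eq_neg_two_mul_add_const hcont hanti hsurj
      (apply_apply_add_apply_of_strictAnti hanti hsurj heq)
    exact ⟨c, Or.inr hc⟩
end

section
/- Let g : ℝ → ℝ be a continuous, strictly decreasing bijective solution of g^3(x) = 3*g(x) - 2*x on ℝ, and let G = g^{-1} be its inverse. Then 2*G(G(x)) - G(x) - x = 0 for every x ∈ ℝ. -/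
/-!
Writing `G = g⁻¹`, the equation becomes `2 G³ = 3 G² - id`, which says exactly that
`F z = 2 G (G z) - G z - z` is invariant under `G`. Along a backward orbit `yₙ = Gⁿ x` the
steps `dₙ = yₙ₊₁ - yₙ` therefore satisfy `dₙ + 2 dₙ₊₁ = F x`, so `dₙ → F x / 3`
geometrically with ratio `-1/2`. Since `G` is decreasing, consecutive steps have opposite
signs, which forces the limit, and hence `F x`, to vanish.
-/

open Filter Topology

lemma tendsto_of_add_two_mul_succ_eq {d : ℕ → ℝ} {c : ℝ}
    (h : ∀ n, d n + 2 * d (n + 1) = c) : Tendsto d atTop (𝓝 (c / 3)) := by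
  have closed_form : ∀ n, d n = c / 3 + (-1 / 2 : ℝ) ^ n * (d 0 - c / 3) := by
    intro n
    induction n with
    | zero => ring
    | succ n ih => rw [pow_succ]; linarith [h n]
  have hgeom : Tendsto (fun n ↦ (-1 / 2 : ℝ) ^ n) atTop (𝓝 0) :=
    tendsto_pow_atTop_nhds_zero_of_abs_lt_one (by norm_num [abs_div])
  have hlim := (hgeom.mul_const (d 0 - c / 3)).const_add (c / 3)
  rw [zero_mul, add_zero] at hlim
  exact hlim.congr fun n ↦ (closed_form n).symm

lemma eq_zero_of_add_two_mul_succ_eq {d : ℕ → ℝ} {c : ℝ}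
    (h : ∀ n, d n + 2 * d (n + 1) = c) (hsign : ∀ n, d n * d (n + 1) ≤ 0) : c = 0 := by
  have hlim := tendsto_of_add_two_mul_succ_eq h
  have hprod : Tendsto (fun n ↦ d n * d (n + 1)) atTop (𝓝 (c / 3 * (c / 3))) :=
    hlim.mul (hlim.comp (tendsto_add_atTop_nat 1))
  nlinarith [le_of_tendsto' hprod hsign]

lemma Antitone.sub_mul_sub_nonpos {α : Type*} [Ring α] [LinearOrder α] [IsStrictOrderedRing α]
    {f : α → α} (hf : Antitone f) (a b : α) :
    (f a - f b) * (a - b) ≤ 0 := by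
  rcases le_total a b with hab | hab
  · exact mul_nonpos_of_nonneg_of_nonpos (sub_nonneg.2 (hf hab)) (sub_nonpos.2 hab)
  · exact mul_nonpos_of_nonpos_of_nonneg (sub_nonpos.2 (hf hab)) (sub_nonneg.2 hab)

lemma Antitone.two_mul_apply_apply_sub_apply_sub_eq_zero {G : ℝ → ℝ} (hG : Antitone G)
    (hrec : ∀ z, 2 * G (G (G z)) = 3 * G (G z) - z) (x : ℝ) :
    2 * G (G x) - G x - x = 0 := by
  set y : ℕ → ℝ := fun n ↦ G^[n] x
  have hy : ∀ n, y (n + 1) = G (y n) := fun n ↦ Function.iterate_succ_apply' G n x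
  have hstep : ∀ n, (y (n + 1) - y n) + 2 * (y (n + 2) - y (n + 1)) = 2 * G (G x) - G x - x := by
    intro n
    induction n with
    | zero => simp only [hy, y, Function.iterate_zero_apply]; ring
    | succ n ih =>
      have h3 : 2 * y (n + 3) = 3 * y (n + 2) - y n := by
        rw [hy (n + 2), hy (n + 1), hy n]
        exact hrec (y n)
      linarith
  refine eq_zero_of_add_two_mul_succ_eq hstep fun n ↦ ?_
  rw [hy (n + 1), hy n, mul_comm]
  exact hG.sub_mul_sub_nonpos _ _

theorem stmt_14_general (g : ℝ → ℝ) (hanti : StrictAnti g)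
    (heq : ∀ x : ℝ, g (g (g x)) = 3 * g x - 2 * x)
    (G : ℝ → ℝ) (hGr : Function.RightInverse G g) :
    ∀ x : ℝ, 2 * G (G x) - G x - x = 0 := by
  have hG : Antitone G := fun a b hab ↦ hanti.le_iff_ge.mp (by rwa [hGr a, hGr b])
  have hrec : ∀ z, 2 * G (G (G z)) = 3 * G (G z) - z := by
    intro z
    have h := heq (G (G (G z)))
    rw [hGr, hGr, hGr] at h
    linarith
  exact hG.two_mul_apply_apply_sub_apply_sub_eq_zero hrec

/-- Let `g : ℝ → ℝ` be a continuous, strictly decreasing bijective solution of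
`g∘g∘g (x) = 3 g(x) - 2 x` on `ℝ`, and let `G` be its inverse. Then
`2 G(G x) - G x - x = 0` for every `x ∈ ℝ`. -/
theorem stmt_14 (g : ℝ → ℝ) (hcont : Continuous g) (hanti : StrictAnti g)
    (hbij : Function.Bijective g)
    (heq : ∀ x : ℝ, g (g (g x)) = 3 * g x - 2 * x)
    (G : ℝ → ℝ) (hGl : Function.LeftInverse G g) (hGr : Function.RightInverse G g) :
    ∀ x : ℝ, 2 * G (G x) - G x - x = 0 :=
  stmt_14_general g hanti heq G hGr
end

section
/- Assume J ⊆ (0,+∞) is a nondegenerate interval that is bounded and whose closure does not contain 0. If f : J → J is continuous on J and satisfies f^3(x) = f(x)^3 / x^2 for all x ∈ J, then f(x) = x for every x ∈ J. -/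
/-!
Along an orbit `x, f x, f² x, …` the logarithms `u n = log (fⁿ x)` satisfy the linear recurrence
`u (n+3) = 3 u (n+1) - 2 u n`, whose characteristic polynomial is `(t - 1)² (t + 2)`. Since `J` is
bounded and bounded away from `0`, the sequence `u` is bounded, which kills both the `(-2)ⁿ` mode
and the linear mode `n`: the orbit is constant, so `f x = x`.
-/

open Set Function

lemma eq_zero_of_forall_abs_le_of_succ_eq_mul {d : ℕ → ℝ} {r C : ℝ} (hr : 1 < |r|)
    (hd : ∀ n, d (n + 1) = r * d n) (hC : ∀ n, |d n| ≤ C) (n : ℕ) : d n = 0 := by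
  have hpow : ∀ n, d n = r ^ n * d 0 := by
    intro n
    induction n with
    | zero => simp
    | succ n ih => rw [hd, ih, pow_succ]; ring
  suffices hd0 : d 0 = 0 by rw [hpow, hd0, mul_zero]
  by_contra hd0
  obtain ⟨m, hm⟩ := pow_unbounded_of_one_lt (C / |d 0|) hr
  rw [div_lt_iff₀ (abs_pos.mpr hd0)] at hm
  have hCm := hC m
  rw [hpow, abs_mul, abs_pow] at hCm
  linarith

lemma eq_zero_of_forall_abs_le_of_succ_eq_add {a : ℕ → ℝ} {A C : ℝ}
    (ha : ∀ n, a (n + 1) = a n + A) (hC : ∀ n, |a n| ≤ C) : A = 0 := by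
  have hlin : ∀ n : ℕ, a n = a 0 + n * A := by
    intro n
    induction n with
    | zero => simp
    | succ n ih => rw [ha, ih]; push_cast; ring
  by_contra hA
  obtain ⟨n, hn⟩ := exists_nat_gt (2 * C / |A|)
  rw [div_lt_iff₀ (abs_pos.mpr hA)] at hn
  have hnA : |(n : ℝ) * A| ≤ 2 * C :=
    calc |(n : ℝ) * A| = |a n - a 0| := by rw [hlin n]; ring_nf
      _ ≤ |a n| + |a 0| := abs_sub _ _
      _ ≤ 2 * C := by linarith [hC n, hC 0]
  rw [abs_mul, Nat.abs_cast] at hnA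
  linarith

theorem eq_of_forall_abs_le_of_rec {u : ℕ → ℝ} {C : ℝ}
    (hrec : ∀ n, u (n + 3) = 3 * u (n + 1) - 2 * u n) (hC : ∀ n, |u n| ≤ C) (n : ℕ) :
    u n = u 0 := by
  -- the second difference of `u` solves `d (n+1) = -2 d n`
  have hd : ∀ n, u (n + 2) - 2 * u (n + 1) + u n = 0 := by
    refine eq_zero_of_forall_abs_le_of_succ_eq_mul (r := -2) (C := 4 * C) (by norm_num)
      (fun n => by linarith [hrec n]) (fun n => ?_)
    have h0 := abs_le.mp (hC n)
    have h1 := abs_le.mp (hC (n + 1))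
    have h2 := abs_le.mp (hC (n + 2))
    exact abs_le.mpr ⟨by linarith, by linarith⟩
  have hstep : ∀ n, u (n + 1) = u n + (u 1 - u 0) := by
    intro n
    induction n with
    | zero => ring
    | succ n ih => linarith [hd n]
  have hA := eq_zero_of_forall_abs_le_of_succ_eq_add hstep hC
  induction n with
  | zero => rfl
  | succ n ih => rw [hstep, ih, hA, add_zero]

lemma exists_forall_abs_log_le {J : Set ℝ} (hbdd : Bornology.IsBounded J)
    (h0 : (0 : ℝ) ∉ closure J) : ∃ C, ∀ y ∈ J, |Real.log y| ≤ C := by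
  have hlog : ContinuousOn Real.log (closure J) :=
    Real.continuousOn_log.mono fun y hy hy0 => h0 (mem_singleton_iff.mp hy0 ▸ hy)
  obtain ⟨C, hC⟩ := (hbdd.isCompact_closure.image_of_continuousOn hlog).isBounded.exists_norm_le
  exact ⟨C, fun y hy => hC _ (mem_image_of_mem _ (subset_closure hy))⟩

lemma log_iterate_add_three {J : Set ℝ} {f : ℝ → ℝ} (hJ : ∀ y ∈ J, y ≠ 0)
    (hmap : MapsTo f J J) (heq : ∀ x ∈ J, f (f (f x)) = f x ^ 3 / x ^ 2) {x : ℝ} (hx : x ∈ J)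
    (n : ℕ) :
    Real.log (f^[n + 3] x) = 3 * Real.log (f^[n + 1] x) - 2 * Real.log (f^[n] x) := by
  have hy := hmap.iterate n hx
  rw [show f^[n + 3] x = f (f (f (f^[n] x))) by simp only [iterate_succ_apply'], heq _ hy,
    Real.log_div (pow_ne_zero _ (hJ _ (hmap hy))) (pow_ne_zero _ (hJ _ hy)), Real.log_pow,
    Real.log_pow, ← iterate_succ_apply' f n]
  push_cast
  ring

theorem stmt_17_general (J : Set ℝ) (hJpos : J ⊆ Set.Ioi (0 : ℝ))
    (hbdd : Bornology.IsBounded J) (h0 : (0 : ℝ) ∉ closure J)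
    (f : ℝ → ℝ) (hmap : Set.MapsTo f J J)
    (heq : ∀ x ∈ J, f (f (f x)) = (f x) ^ 3 / x ^ 2) :
    ∀ x ∈ J, f x = x := by
  intro x hx
  obtain ⟨C, hC⟩ := exists_forall_abs_log_le hbdd h0
  have hlog : Real.log (f^[1] x) = Real.log (f^[0] x) :=
    eq_of_forall_abs_le_of_rec (u := fun n => Real.log (f^[n] x))
      (log_iterate_add_three (fun y hy => (hJpos hy).ne') hmap heq hx)
      (fun n => hC _ (hmap.iterate n hx)) 1
  exact Real.log_injOn_pos (hJpos (hmap hx)) (hJpos hx) hlog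

/-- If `J ⊆ (0, ∞)` is a bounded nondegenerate interval with `0 ∉ closure J` and
`f : J → J` is continuous and satisfies `f(f(f x)) = (f x)^3 / x^2` on `J`, then
`f = id` on `J`. -/
theorem stmt_17 (J : Set ℝ) (hJpos : J ⊆ Set.Ioi (0 : ℝ)) (hJ : J.OrdConnected)
    (hnd : J.Nontrivial) (hbdd : Bornology.IsBounded J) (h0 : (0 : ℝ) ∉ closure J)
    (f : ℝ → ℝ) (hmap : Set.MapsTo f J J) (hcont : ContinuousOn f J)
    (heq : ∀ x ∈ J, f (f (f x)) = (f x) ^ 3 / x ^ 2) :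
    ∀ x ∈ J, f x = x :=
  stmt_17_general J hJpos hbdd h0 f hmap heq
end

section
/- If f : (0,+∞) → (0,+∞) is continuous and satisfies f^3(x) = f(x)^3 / x^2 for all x > 0, then there exists c ∈ (0,+∞) such that either f(x) = c*x for every x > 0, or f(x) = c / x^2 for every x > 0. -/
/-!
With `F t = log (f (exp t))` the equation becomes `F (F (F t)) = 3 F t - 2 t`, a linear recurrence
along each orbit with characteristic polynomial `(X - 1)² (X + 2)`: the steps of the orbit are
`F^[n+1] t - F^[n] t = (β - (-2)ⁿ γ) / 3`, where the drift `β` and the alternation `γ` are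
computed at `t`; passing from `t` to `F t` keeps `β` and multiplies `γ` by `-2`.
A continuous solution is injective, hence strictly monotone.

If `F` is increasing, consecutive steps have the same sign, which for large `n` forces `γ = 0`.
Then `F t - t` is a monotone continuous quantity invariant under `F`, and since orbits move
towards `±∞` at speed `F t - t`, it is constant.

If `F` is decreasing, consecutive steps have opposite signs. Now `F` is onto, and along backward
orbits `γ` is divided by `-2` each step, which forces `β = 0`. Then the backward orbit of `t`
converges to a fixed point `(F t + 2 t) / 3`, and a decreasing map has only one fixed point.
-/

open Function Filter Topology Set

theorem apply_iterate_of_apply_eq_mul {α M : Type*} [Monoid M] {F : α → α} {φ : α → M}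
    {c : M} (h : ∀ x, φ (F x) = c * φ x) (n : ℕ) (x : α) : φ (F^[n] x) = c ^ n * φ x := by
  induction n with
  | zero => simp
  | succ n ih => rw [iterate_succ_apply', h, ih, pow_succ', mul_assoc]

theorem apply_iterate_of_apply_eq {α β : Type*} {F : α → α} {φ : α → β}
    (h : ∀ x, φ (F x) = φ x) (n : ℕ) (x : α) : φ (F^[n] x) = φ x :=
  congrFun (iterate_invariant (funext h) n) x

theorem Antitone.eq_of_isFixedPt {α : Type*} [LinearOrder α] {f : α → α} (hf : Antitone f)
    {a b : α} (ha : IsFixedPt f a) (hb : IsFixedPt f b) : a = b := by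
  rcases le_total a b with hab | hab
  · exact le_antisymm hab (by simpa only [ha.eq, hb.eq] using hf hab)
  · exact le_antisymm (by simpa only [ha.eq, hb.eq] using hf hab) hab

section OrderedField

variable {K : Type*} [Field K] [LinearOrder K] [IsStrictOrderedRing K] {f : K → K}

theorem Monotone.sub_mul_sub_nonneg (hf : Monotone f) (t : K) :
    0 ≤ (f t - t) * (f (f t) - f t) := by
  rcases le_total t (f t) with h | h
  · exact mul_nonneg (sub_nonneg.2 h) (sub_nonneg.2 (hf h))
  · exact mul_nonneg_of_nonpos_of_nonpos (sub_nonpos.2 h) (sub_nonpos.2 (hf h))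

theorem Antitone.sub_mul_sub_nonpos_s19 (hf : Antitone f) (t : K) :
    (f t - t) * (f (f t) - f t) ≤ 0 := by
  rcases le_total t (f t) with h | h
  · exact mul_nonpos_of_nonneg_of_nonpos (sub_nonneg.2 h) (sub_nonpos.2 (hf h))
  · exact mul_nonpos_of_nonpos_of_nonneg (sub_nonpos.2 h) (sub_nonneg.2 (hf h))

theorem sub_mul_add_two_mul_neg {β x : K} (h : |β| < |x|) : (β - x) * (β + 2 * x) < 0 := by
  rcases le_total 0 x with hx | hx
  · obtain ⟨h₁, h₂⟩ := abs_lt.1 (h.trans_eq (abs_of_nonneg hx))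
    exact mul_neg_of_neg_of_pos (by linarith) (by linarith)
  · obtain ⟨h₁, h₂⟩ := abs_lt.1 (h.trans_eq (abs_of_nonpos hx))
    exact mul_neg_of_pos_of_neg (by linarith) (by linarith)

end OrderedField

theorem eq_zero_of_forall_sub_mul_add_two_mul_nonneg {β γ : ℝ}
    (h : ∀ n : ℕ, 0 ≤ (β - (-2) ^ n * γ) * (β + 2 * ((-2) ^ n * γ))) : γ = 0 := by
  by_contra hγ
  obtain ⟨n, hn⟩ := pow_unbounded_of_one_lt (|β| / |γ|) (one_lt_two : (1 : ℝ) < 2)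
  have hlt : |β| < |(-2) ^ n * γ| := by
    rwa [abs_mul, abs_pow, abs_neg, abs_two, ← div_lt_iff₀ (abs_pos.2 hγ)]
  exact (h n).not_gt (sub_mul_add_two_mul_neg hlt)

theorem eq_zero_of_forall_sub_mul_add_two_mul_nonpos {β : ℝ} {x : ℕ → ℝ}
    (hx : Tendsto x atTop (𝓝 0)) (h : ∀ n, (β - x n) * (β + 2 * x n) ≤ 0) : β = 0 := by
  have hlim : Tendsto (fun n => (β - x n) * (β + 2 * x n)) atTop (𝓝 (β * β)) := by
    simpa using (tendsto_const_nhds.sub hx).mul (tendsto_const_nhds.add (hx.const_mul 2))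
  exact mul_self_eq_zero.1 (le_antisymm (le_of_tendsto' hlim h) (mul_self_nonneg β))

section Recurrence

variable {F : ℝ → ℝ}

/-- For a solution of `F (F (F t)) = 3 F t - 2 t` the orbit is `F^[n] t = A + B n + C (-2)ⁿ`, with
`orbitDrift F t = 3 B` and `orbitAlternation F t = 9 C`. -/
def orbitDrift (F : ℝ → ℝ) (t : ℝ) : ℝ := F (F t) + F t - 2 * t

def orbitAlternation (F : ℝ → ℝ) (t : ℝ) : ℝ := F (F t) - 2 * F t + t

theorem sub_mul_sub_eq_orbitDrift_orbitAlternation (t : ℝ) :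
    9 * ((F t - t) * (F (F t) - F t)) =
      (orbitDrift F t - orbitAlternation F t) * (orbitDrift F t + 2 * orbitAlternation F t) := by
  simp only [orbitDrift, orbitAlternation]; ring

theorem orbitDrift_apply (hF : ∀ t, F (F (F t)) = 3 * F t - 2 * t) (t : ℝ) :
    orbitDrift F (F t) = orbitDrift F t := by
  simp only [orbitDrift, hF]; ring

theorem orbitAlternation_apply (hF : ∀ t, F (F (F t)) = 3 * F t - 2 * t) (t : ℝ) :
    orbitAlternation F (F t) = -2 * orbitAlternation F t := by
  simp only [orbitAlternation, hF]; ring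

theorem orbitAlternation_eq_zero_of_monotone (hF : ∀ t, F (F (F t)) = 3 * F t - 2 * t)
    (hmono : Monotone F) (t : ℝ) : orbitAlternation F t = 0 := by
  refine eq_zero_of_forall_sub_mul_add_two_mul_nonneg (β := orbitDrift F t) fun n => ?_
  rw [← apply_iterate_of_apply_eq (orbitDrift_apply hF) n,
    ← apply_iterate_of_apply_eq_mul (orbitAlternation_apply hF),
    ← sub_mul_sub_eq_orbitDrift_orbitAlternation]
  exact mul_nonneg (by norm_num) (hmono.sub_mul_sub_nonneg _)

theorem surjective_of_antitone_s19 (hF : ∀ t, F (F (F t)) = 3 * F t - 2 * t) (hc : Continuous F)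
    (hanti : Antitone F) : Surjective F := by
  intro y
  obtain ⟨a, ha⟩ : ∃ a, 2 * a = 3 * F 0 - y := ⟨(3 * F 0 - y) / 2, by ring⟩
  refine mem_range_of_exists_le_of_exists_ge hc ⟨F (F (max 0 a)), ?_⟩ ⟨F (F (min 0 a)), ?_⟩
  · have := hanti (le_max_left 0 a)
    have := le_max_right 0 a
    rw [hF]; linarith
  · have := hanti (min_le_left 0 a)
    have := min_le_right 0 a
    rw [hF]; linarith

theorem orbitDrift_eq_zero_of_antitone (hF : ∀ t, F (F (F t)) = 3 * F t - 2 * t)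
    (hanti : Antitone F) (hsurj : Surjective F) (t : ℝ) : orbitDrift F t = 0 := by
  choose s hs using fun n : ℕ => hsurj.iterate n t
  have hs_alt : ∀ n, orbitAlternation F (s n) = orbitAlternation F t * (-1 / 2) ^ n := by
    intro n
    rw [← hs n, apply_iterate_of_apply_eq_mul (orbitAlternation_apply hF), mul_right_comm,
      ← mul_pow]
    norm_num
  have hs_drift : ∀ n, orbitDrift F (s n) = orbitDrift F t := fun n => by
    rw [← hs n, apply_iterate_of_apply_eq (orbitDrift_apply hF)]
  refine eq_zero_of_forall_sub_mul_add_two_mul_nonpos (x := fun n => orbitAlternation F (s n)) ?_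
    fun n => ?_
  · simp_rw [hs_alt]
    simpa using (tendsto_pow_atTop_nhds_zero_of_abs_lt_one (r := -1 / 2)
      (by norm_num [abs_div])).const_mul (orbitAlternation F t)
  · rw [← hs_drift n, ← sub_mul_sub_eq_orbitDrift_orbitAlternation]
    exact mul_nonpos_of_nonneg_of_nonpos (by norm_num) (hanti.sub_mul_sub_nonpos_s19 _)

end Recurrence

section Translation

variable {F : ℝ → ℝ}

theorem sub_self_iterate (h : ∀ t, F (F t) = 2 * F t - t) (n : ℕ) (t : ℝ) :
    F (F^[n] t) - F^[n] t = F t - t :=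
  apply_iterate_of_apply_eq (φ := fun u => F u - u) (fun u => by rw [h]; ring) n t

theorem iterate_eq_add_mul_sub_self (h : ∀ t, F (F t) = 2 * F t - t) (n : ℕ) (t : ℝ) :
    F^[n] t = t + n * (F t - t) := by
  induction n with
  | zero => simp
  | succ n ih =>
    rw [iterate_succ_apply', ← sub_add_cancel (F (F^[n] t)) (F^[n] t), sub_self_iterate h, ih]
    push_cast; ring

theorem monotone_sub_self (h : ∀ t, F (F t) = 2 * F t - t) (hmono : Monotone F) :
    Monotone fun t => F t - t := by
  intro u v huv
  by_contra! hlt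
  obtain ⟨n, hn⟩ := exists_nat_gt ((v - u) / ((F u - u) - (F v - v)))
  rw [div_lt_iff₀ (sub_pos.2 hlt)] at hn
  have := hmono.iterate n huv
  rw [iterate_eq_add_mul_sub_self h, iterate_eq_add_mul_sub_self h] at this
  linarith

theorem sub_self_eq_of_le (h : ∀ t, F (F t) = 2 * F t - t) (hmono : Monotone F) {x v : ℝ}
    (hx : 0 < F x - x) (hxv : x ≤ v) : F v - v = F x - x := by
  obtain ⟨n, hn⟩ := exists_nat_gt ((v - x) / (F x - x))
  rw [div_lt_iff₀ hx] at hn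
  have hv : v ≤ F^[n] x := by rw [iterate_eq_add_mul_sub_self h]; linarith
  have hle : F v - v ≤ F (F^[n] x) - F^[n] x := monotone_sub_self h hmono hv
  rw [sub_self_iterate h] at hle
  exact le_antisymm hle (monotone_sub_self h hmono hxv)

theorem sub_self_eq_of_pos_s19 (hc : Continuous F) (h : ∀ t, F (F t) = 2 * F t - t)
    (hmono : Monotone F) {x : ℝ} (hx : 0 < F x - x) (u : ℝ) : F u - u = F x - x := by
  rcases le_total x u with hxu | hux
  · exact sub_self_eq_of_le h hmono hx hxu
  by_cases hu : 0 < F u - u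
  · exact (sub_self_eq_of_le h hmono hu hux).symm
  obtain ⟨w, ⟨-, hwx⟩, hw⟩ := intermediate_value_Icc hux (hc.sub continuous_id).continuousOn
    (show (F x - x) / 2 ∈ Icc (F u - u) (F x - x) from ⟨by linarith, by linarith⟩)
  have hw' : F w - w = (F x - x) / 2 := hw
  have := sub_self_eq_of_le h hmono (by linarith) hwx
  linarith

theorem exists_eq_add_of_comp_self (hc : Continuous F) (hmono : Monotone F)
    (h : ∀ t, F (F t) = 2 * F t - t) : ∃ b, ∀ t, F t = t + b := by
  by_cases hpos : ∃ x, 0 < F x - x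
  · obtain ⟨x, hx⟩ := hpos
    exact ⟨F x - x, fun t => by linarith [sub_self_eq_of_pos_s19 hc h hmono hx t]⟩
  by_cases hneg : ∃ x, F x - x < 0
  · obtain ⟨x, hx⟩ := hneg
    -- conjugating by `t ↦ -t` turns the negative case into the positive one
    have hx' : 0 < -F (- -x) - -x := by rw [neg_neg]; linarith
    have := sub_self_eq_of_pos_s19 (F := fun t => -F (-t)) (by fun_prop)
      (fun t => by simp only [neg_neg, h]; ring)
      (fun a b hab => neg_le_neg (hmono (neg_le_neg hab))) hx'
    refine ⟨F x - x, fun t => ?_⟩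
    have ht := this (-t)
    simp only [neg_neg] at ht
    linarith
  push Not at hpos hneg
  exact ⟨0, fun t => by linarith [hpos t, hneg t]⟩

end Translation

section Reflection

variable {F : ℝ → ℝ}

theorem isFixedPt_add_two_mul_div_three (hc : Continuous F) (hsurj : Surjective F)
    (h : ∀ t, F (F t) = 2 * t - F t) (t : ℝ) : IsFixedPt F ((F t + 2 * t) / 3) := by
  choose s hs using fun n : ℕ => hsurj.iterate n t
  have hstep : ∀ n, F (s n) - s n = (F t - t) * (-1 / 2) ^ n := by
    intro n
    rw [← hs n, apply_iterate_of_apply_eq_mul (φ := fun u => F u - u) (c := -2)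
      (fun u => by rw [h]; ring), mul_right_comm, ← mul_pow]
    norm_num
  have hsum : ∀ n, F (s n) + 2 * s n = F t + 2 * t := by
    intro n
    rw [← hs n, apply_iterate_of_apply_eq (φ := fun u => F u + 2 * u) (fun u => by rw [h]; ring)]
  have hstep_lim : Tendsto (fun n => F (s n) - s n) atTop (𝓝 0) := by
    simp_rw [hstep]
    simpa using (tendsto_pow_atTop_nhds_zero_of_abs_lt_one (r := -1 / 2)
      (by norm_num [abs_div])).const_mul (F t - t)
  have hs_lim : Tendsto s atTop (𝓝 ((F t + 2 * t) / 3)) := by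
    have : s = fun n => ((F t + 2 * t) - (F (s n) - s n)) / 3 := by
      funext n; rw [← hsum n]; ring
    rw [this]
    simpa using (tendsto_const_nhds.sub hstep_lim).div_const 3
  have hFs_lim : Tendsto (F ∘ s) atTop (𝓝 ((F t + 2 * t) / 3)) := by
    have : F ∘ s = fun n => ((F t + 2 * t) + 2 * (F (s n) - s n)) / 3 := by
      funext n; rw [comp_apply, ← hsum n]; ring
    rw [this]
    simpa using (tendsto_const_nhds.add (hstep_lim.const_mul 2)).div_const 3
  exact tendsto_nhds_unique ((hc.tendsto _).comp hs_lim) hFs_lim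

theorem exists_eq_sub_two_mul (hc : Continuous F) (hanti : Antitone F)
    (hsurj : Surjective F) (h : ∀ t, F (F t) = 2 * t - F t) : ∃ c, ∀ t, F t = c - 2 * t := by
  have hfix := isFixedPt_add_two_mul_div_three hc hsurj h
  refine ⟨F 0, fun t => ?_⟩
  have := hanti.eq_of_isFixedPt (hfix t) (hfix 0)
  linarith

end Reflection

theorem eq_add_const_or_eq_const_sub_two_mul {F : ℝ → ℝ} (hc : Continuous F)
    (hF : ∀ t, F (F (F t)) = 3 * F t - 2 * t) :
    (∃ b, ∀ t, F t = t + b) ∨ ∃ c, ∀ t, F t = c - 2 * t := by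
  have hinj : Injective F := fun a b hab => by
    have ha := hF a
    rw [hab, hF b] at ha
    linarith
  rcases hc.strictMono_of_inj hinj with hmono | hanti
  · refine .inl (exists_eq_add_of_comp_self hc hmono.monotone fun t => ?_)
    have := orbitAlternation_eq_zero_of_monotone hF hmono.monotone t
    rw [orbitAlternation] at this
    linarith
  · have hsurj := surjective_of_antitone_s19 hF hc hanti.antitone
    refine .inr (exists_eq_sub_two_mul hc hanti.antitone hsurj fun t => ?_)
    have := orbitDrift_eq_zero_of_antitone hF hanti.antitone hsurj t
    rw [orbitDrift] at this
    linarith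

section LogConjugate

open Real

variable {f : ℝ → ℝ}

noncomputable def logConj (f : ℝ → ℝ) (t : ℝ) : ℝ := log (f (exp t))

theorem logConj_log {x : ℝ} (hx : 0 < x) : logConj f (log x) = log (f x) := by
  rw [logConj, exp_log hx]

theorem exp_logConj_log (hmap : MapsTo f (Ioi 0) (Ioi 0)) {x : ℝ} (hx : 0 < x) :
    exp (logConj f (log x)) = f x := by
  rw [logConj_log hx, exp_log (hmap hx)]

theorem continuous_logConj (hmap : MapsTo f (Ioi 0) (Ioi 0)) (hcont : ContinuousOn f (Ioi 0)) :
    Continuous (logConj f) :=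
  (hcont.comp_continuous continuous_exp fun t => exp_pos t).log fun t => (hmap (exp_pos t)).ne'

theorem logConj_iterate_three (hmap : MapsTo f (Ioi 0) (Ioi 0))
    (heq : ∀ x > 0, f (f (f x)) = f x ^ 3 / x ^ 2) (t : ℝ) :
    logConj f (logConj f (logConj f t)) = 3 * logConj f t - 2 * t := by
  have h₀ : 0 < exp t := exp_pos t
  have h₁ : 0 < f (exp t) := hmap h₀
  have h₂ : 0 < f (f (exp t)) := hmap h₁
  have hlog : logConj f t = log (f (exp t)) := rfl
  rw [hlog, logConj_log h₁, logConj_log h₂, heq _ h₀, log_div (by positivity) (by positivity),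
    log_pow, log_pow, log_exp]
  push_cast
  ring

end LogConjugate

/-- If `f : (0, ∞) → (0, ∞)` is continuous and satisfies `f(f(f x)) = (f x)^3 / x^2`
for all `x > 0`, then there is `c > 0` such that either `f(x) = c x` for all `x > 0`,
or `f(x) = c / x^2` for all `x > 0`. -/
theorem stmt_19 (f : ℝ → ℝ) (hmap : Set.MapsTo f (Set.Ioi (0 : ℝ)) (Set.Ioi (0 : ℝ)))
    (hcont : ContinuousOn f (Set.Ioi (0 : ℝ)))
    (heq : ∀ x > (0 : ℝ), f (f (f x)) = (f x) ^ 3 / x ^ 2) :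
    ∃ c : ℝ, 0 < c ∧
      ((∀ x > (0 : ℝ), f x = c * x) ∨ (∀ x > (0 : ℝ), f x = c / x ^ 2)) := by
  rcases eq_add_const_or_eq_const_sub_two_mul (continuous_logConj hmap hcont)
    (logConj_iterate_three hmap heq) with ⟨b, hb⟩ | ⟨c, hc⟩
  · refine ⟨Real.exp b, Real.exp_pos b, .inl fun x hx => ?_⟩
    rw [← exp_logConj_log hmap hx, hb, Real.exp_add, Real.exp_log hx, mul_comm]
  · refine ⟨Real.exp c, Real.exp_pos c, .inr fun x hx => ?_⟩
    rw [← exp_logConj_log hmap hx, hc, Real.exp_sub, ← Real.log_rpow hx,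
      Real.exp_log (by positivity), Real.rpow_two]
end
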